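/- arXiv:1309.5348 — 5 statements merged into one kernel-verified Lean document; each statement's English description precedes it below -/
import Mathlib

section
/- Let I and J be homogeneous ideals of A with the same Hilbert function, ≺ a fixed monomial order, and G_1, G_2 the reduced Gröbner bases of I and J with respect to ≺. If d is an integer at least the largest degree of an element of G_1 and cs(I_{≤d}) = cs(J_{≤d}), then supp(G_1) = supp(G_2). -/
open MvPolynomial

/-- The circuits set of a set of polynomials: minimal supports (w.r.t. inclusion)
of nonzero elements. -/
def cs {σ R : Type*} [CommSemiring R] (S : Set (MvPolynomial σ R)) : Set (Finset (σ →₀ ℕ)) :=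
  {s | (∃ f ∈ S, f ≠ 0 ∧ f.support = s) ∧
       ∀ g ∈ S, g ≠ 0 → g.support ⊆ s → g.support = s}

/-- A homogeneous ideal: one containing all homogeneous components of its elements. -/
def IsHomogIdeal {σ R : Type*} [CommSemiring R] (I : Ideal (MvPolynomial σ R)) : Prop :=
  ∀ f ∈ I, ∀ d : ℕ, MvPolynomial.homogeneousComponent d f ∈ I
/-- A (strict) monomial order on exponent vectors: a strict total order compatible
with addition of exponent vectors (i.e. multiplication of monomials). -/
def IsMonomialOrder (n : ℕ) (r : (Fin n →₀ ℕ) → (Fin n →₀ ℕ) → Prop) : Prop :=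
  IsTrichotomous _ r ∧ IsTrans _ r ∧ IsIrrefl _ r ∧
  (∀ a b c : Fin n →₀ ℕ, r a b → r (a + c) (b + c)) ∧
  (∀ a c : Fin n →₀ ℕ, c ≠ 0 → r a (a + c))

/-- `m` is the leading (initial) monomial of `f` with respect to the order `r`. -/
def leadOf {K : Type*} [Field K] {n : ℕ} (r : (Fin n →₀ ℕ) → (Fin n →₀ ℕ) → Prop)
    (f : MvPolynomial (Fin n) K) (m : Fin n →₀ ℕ) : Prop :=
  m ∈ f.support ∧ ∀ m' ∈ f.support, m' = m ∨ r m' m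

/-- The initial ideal of `I` with respect to a monomial order `r`. -/
noncomputable def iniIdeal {K : Type*} [Field K] {n : ℕ} (r : (Fin n →₀ ℕ) → (Fin n →₀ ℕ) → Prop)
    (I : Ideal (MvPolynomial (Fin n) K)) : Ideal (MvPolynomial (Fin n) K) :=
  Ideal.span {p | ∃ f ∈ I, f ≠ 0 ∧ ∃ m, leadOf r f m ∧ p = monomial m (1 : K)}

/-- `G` is a Gröbner basis of `I` with respect to `r`. -/
def IsGB {K : Type*} [Field K] {n : ℕ} (r : (Fin n →₀ ℕ) → (Fin n →₀ ℕ) → Prop)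
    (I : Ideal (MvPolynomial (Fin n) K)) (G : Finset (MvPolynomial (Fin n) K)) : Prop :=
  (G : Set (MvPolynomial (Fin n) K)) ⊆ I ∧ (0 : MvPolynomial (Fin n) K) ∉ G ∧
  iniIdeal r I = Ideal.span {p | ∃ f ∈ G, ∃ m, leadOf r f m ∧ p = monomial m (1 : K)}

/-- `G` is the reduced Gröbner basis of `I` with respect to `r`: a Gröbner basis of
monic elements such that the leading monomial of each element divides no monomial in
the support of any other element. -/
def IsRGB {K : Type*} [Field K] {n : ℕ} (r : (Fin n →₀ ℕ) → (Fin n →₀ ℕ) → Prop)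
    (I : Ideal (MvPolynomial (Fin n) K)) (G : Finset (MvPolynomial (Fin n) K)) : Prop :=
  IsGB r I G ∧
  (∀ f ∈ G, ∀ m, leadOf r f m → coeff m f = 1) ∧
  (∀ f ∈ G, ∀ g ∈ G, f ≠ g → ∀ mf, leadOf r f mf → ∀ m ∈ g.support, ¬ mf ≤ m)

/-- The truncation `I_{≤d}` of a homogeneous ideal, as a set: elements of `I` of
(total) degree at most `d`. -/
def trunc {σ R : Type*} [CommSemiring R] (I : Ideal (MvPolynomial σ R)) (d : ℕ) :
    Set (MvPolynomial σ R) :=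
  {f | f ∈ I ∧ f.totalDegree ≤ d}

/-- The degree-`d` graded component of an ideal as a `K`-submodule. -/
noncomputable def degComp {K : Type*} [Field K] {n : ℕ}
    (I : Ideal (MvPolynomial (Fin n) K)) (d : ℕ) : Submodule K (MvPolynomial (Fin n) K) :=
  (Submodule.restrictScalars K I) ⊓ homogeneousSubmodule (Fin n) K d


section OrderLemmas
variable {K : Type*} [Field K] {n : ℕ} {r : (Fin n →₀ ℕ) → (Fin n →₀ ℕ) → Prop}

lemma IsMonomialOrder.asymm (hr : IsMonomialOrder n r) {a b : Fin n →₀ ℕ}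
    (h : r a b) : ¬ r b a := fun h' => hr.2.2.1.1 a (hr.2.1.1 a b a h h')

lemma lead_unique (hr : IsMonomialOrder n r) {f : MvPolynomial (Fin n) K} {m m' : Fin n →₀ ℕ}
    (h : leadOf r f m) (h' : leadOf r f m') : m = m' := by
  rcases h'.2 m h.1 with h1 | h1
  · exact h1
  · rcases h.2 m' h'.1 with h2 | h2
    · exact h2.symm
    · exact absurd h1 (hr.asymm h2)

lemma finset_exists_max (hr : IsMonomialOrder n r) (s : Finset (Fin n →₀ ℕ)) (hs : s.Nonempty) :
    ∃ m ∈ s, ∀ m' ∈ s, m' = m ∨ r m' m := by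
  classical
  induction s using Finset.induction_on with
  | empty => exact absurd hs (by simp)
  | @insert a s' ha ih =>
    rcases s'.eq_empty_or_nonempty with h | h
    · subst h; exact ⟨a, by simp⟩
    · obtain ⟨m, hm, hmax⟩ := ih h
      rcases (haveI := hr.1; trichotomous (r := r) a m) with h1 | h1 | h1
      · refine ⟨m, Finset.mem_insert_of_mem hm, ?_⟩
        intro m' hm'
        rcases Finset.mem_insert.mp hm' with h2 | h2
        · exact Or.inr (h2 ▸ h1)
        · exact hmax m' h2
      · exact ⟨m, Finset.mem_insert_of_mem hm, fun m' hm' => by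
          rcases Finset.mem_insert.mp hm' with h2 | h2
          · exact Or.inl (h2.trans h1)
          · exact hmax m' h2⟩
      · refine ⟨a, Finset.mem_insert_self a s', ?_⟩
        intro m' hm'
        rcases Finset.mem_insert.mp hm' with h2 | h2
        · exact Or.inl h2
        · rcases hmax m' h2 with h3 | h3
          · exact Or.inr (h3 ▸ h1)
          · exact Or.inr (hr.2.1.1 _ _ _ h3 h1)

lemma lead_exists (hr : IsMonomialOrder n r) {f : MvPolynomial (Fin n) K} (hf : f ≠ 0) :
    ∃ m, leadOf r f m := by
  obtain ⟨m, hm, hmax⟩ := finset_exists_max hr f.support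
    (by rwa [Finset.nonempty_iff_ne_empty, Ne, MvPolynomial.support_eq_empty])
  exact ⟨m, hm, hmax⟩

lemma lead_congr {f g : MvPolynomial (Fin n) K} (h : f.support = g.support)
    {m : Fin n →₀ ℕ} (hf : leadOf r f m) : leadOf r g m := ⟨h ▸ hf.1, h ▸ hf.2⟩

lemma lead_self_div (hr : IsMonomialOrder n r) {f : MvPolynomial (Fin n) K} {mg m : Fin n →₀ ℕ}
    (hlead : leadOf r f mg) (hm : m ∈ f.support) (hle : mg ≤ m) : m = mg := by
  obtain ⟨c, rfl⟩ := le_iff_exists_add.mp hle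
  rcases eq_or_ne c 0 with rfl | hc
  · simp
  · exfalso
    have h1 := hr.2.2.2.2 mg c hc
    rcases hlead.2 _ hm with h2 | h2
    · exact hr.2.2.1.1 mg (by rw [h2] at h1; exact h1)
    · exact hr.asymm h1 h2
end OrderLemmas


section MonIdeal
variable {K : Type*} [Field K] {n : ℕ}

/-- The monomial ideal on a set of exponents. -/
noncomputable def mIdeal (K : Type*) [Field K] {n : ℕ} (S : Set (Fin n →₀ ℕ)) : Ideal (MvPolynomial (Fin n) K) :=
  Ideal.span ((fun m => monomial m (1 : K)) '' S)

lemma mem_mIdeal_support {S : Set (Fin n →₀ ℕ)} {f : MvPolynomial (Fin n) K}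
    (hf : f ∈ mIdeal K S) : ∀ m ∈ f.support, ∃ s ∈ S, s ≤ m := by
  classical
  refine Submodule.span_induction ?_ ?_ ?_ ?_ hf
  · rintro x ⟨s, hs, rfl⟩ m hm
    rw [MvPolynomial.support_monomial] at hm
    simp only [one_ne_zero, if_false, Finset.mem_singleton] at hm
    exact ⟨s, hs, hm ▸ le_refl s⟩
  · simp
  · intro x y _ _ hx hy m hm
    rcases Finset.mem_union.mp (MvPolynomial.support_add hm) with h | h
    · exact hx m h
    · exact hy m h
  · intro a x _ hx m hm
    rw [smul_eq_mul] at hm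
    classical
    obtain ⟨u, hu, v, hv, rfl⟩ := Finset.mem_add.mp (MvPolynomial.support_mul a x hm)
    obtain ⟨s, hs, hsv⟩ := hx v hv
    exact ⟨s, hs, hsv.trans (le_add_self)⟩

lemma monomial_mem_mIdeal {S : Set (Fin n →₀ ℕ)} {s m : Fin n →₀ ℕ}
    (hs : s ∈ S) (hle : s ≤ m) : monomial m (1 : K) ∈ mIdeal K S := by
  obtain ⟨c, rfl⟩ := le_iff_exists_add.mp hle
  have : monomial (s + c) (1 : K) = monomial c (1 : K) * monomial s (1 : K) := by
    rw [MvPolynomial.monomial_mul, one_mul, add_comm]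
  rw [this]
  exact Ideal.mul_mem_left _ _ (Ideal.subset_span ⟨s, hs, rfl⟩)

lemma mem_mIdeal_of_support {S : Set (Fin n →₀ ℕ)} {f : MvPolynomial (Fin n) K}
    (h : ∀ m ∈ f.support, monomial m (1 : K) ∈ mIdeal K S) : f ∈ mIdeal K S := by
  rw [f.as_sum]
  refine Submodule.sum_mem _ fun m hm => ?_
  have : monomial m (coeff m f) = C (coeff m f) * monomial m (1 : K) := by
    rw [MvPolynomial.C_mul_monomial, mul_one]
  rw [this]
  exact Ideal.mul_mem_left _ _ (h m hm)
end MonIdeal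

section GBLemmas
variable {K : Type*} [Field K] {n : ℕ} {r : (Fin n →₀ ℕ) → (Fin n →₀ ℕ) → Prop}

/-- Exponents of leading monomials of nonzero elements of an ideal. -/
def leadSetI (r : (Fin n →₀ ℕ) → (Fin n →₀ ℕ) → Prop) (I : Ideal (MvPolynomial (Fin n) K)) :
    Set (Fin n →₀ ℕ) := {m | ∃ f ∈ I, f ≠ 0 ∧ leadOf r f m}

/-- Exponents of leading monomials of elements of a finite set. -/
def leadSetG (r : (Fin n →₀ ℕ) → (Fin n →₀ ℕ) → Prop) (G : Finset (MvPolynomial (Fin n) K)) :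
    Set (Fin n →₀ ℕ) := {m | ∃ f ∈ G, leadOf r f m}

lemma iniIdeal_eq_mIdeal (I : Ideal (MvPolynomial (Fin n) K)) :
    iniIdeal r I = mIdeal K (leadSetI r I) := by
  unfold iniIdeal mIdeal
  congr 1
  ext p
  constructor
  · rintro ⟨f, hf, hf0, m, hl, rfl⟩
    exact ⟨m, ⟨f, hf, hf0, hl⟩, rfl⟩
  · rintro ⟨m, ⟨f, hf, hf0, hl⟩, rfl⟩
    exact ⟨f, hf, hf0, m, hl, rfl⟩

lemma IsGB.ini_eq {I : Ideal (MvPolynomial (Fin n) K)} {G : Finset (MvPolynomial (Fin n) K)}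
    (hG : IsGB r I G) : iniIdeal r I = mIdeal K (leadSetG r G) := by
  rw [hG.2.2]
  unfold mIdeal
  congr 1
  ext p
  constructor
  · rintro ⟨f, hf, m, hl, rfl⟩
    exact ⟨m, ⟨f, hf, hl⟩, rfl⟩
  · rintro ⟨m, ⟨f, hf, hl⟩, rfl⟩
    exact ⟨f, hf, m, hl, rfl⟩

lemma monomial_lead_mem_ini {I : Ideal (MvPolynomial (Fin n) K)} {f : MvPolynomial (Fin n) K}
    {m : Fin n →₀ ℕ} (hf : f ∈ I) (hf0 : f ≠ 0) (hl : leadOf r f m) :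
    monomial m (1 : K) ∈ iniIdeal r I :=
  Ideal.subset_span ⟨f, hf, hf0, m, hl, rfl⟩

/-- Resolving a divisibility against a reduced Gröbner basis: if the lead of `h ∈ G`
divides a monomial of `g ∈ G`, then `h = g` and the monomial is the lead of `g`. -/
lemma red_resolve (hr : IsMonomialOrder n r) {I : Ideal (MvPolynomial (Fin n) K)}
    {G : Finset (MvPolynomial (Fin n) K)} (hG : IsRGB r I G)
    {g : MvPolynomial (Fin n) K} (hg : g ∈ G) {mg : Fin n →₀ ℕ} (hlg : leadOf r g mg)
    {m : Fin n →₀ ℕ} (hm : m ∈ g.support) {s : Fin n →₀ ℕ} (hs : s ∈ leadSetG r G)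
    (hle : s ≤ m) : m = mg ∧ s = mg := by
  obtain ⟨h, hh, hlh⟩ := hs
  rcases eq_or_ne h g with rfl | hne
  · have hsm : s = mg := lead_unique hr hlh hlg
    subst hsm
    exact ⟨lead_self_div hr hlg hm hle, rfl⟩
  · exact absurd hle (hG.2.2 h hh g hg hne s hlh m hm)

/-- The support of an element of a reduced Gröbner basis is a minimal support in `I`. -/
lemma RGB_support_minimal (hr : IsMonomialOrder n r) {I : Ideal (MvPolynomial (Fin n) K)}
    {G : Finset (MvPolynomial (Fin n) K)} (hG : IsRGB r I G)
    {g : MvPolynomial (Fin n) K} (hg : g ∈ G) {mg : Fin n →₀ ℕ} (hlg : leadOf r g mg)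
    {f : MvPolynomial (Fin n) K} (hfI : f ∈ I) (hf0 : f ≠ 0) (hsub : f.support ⊆ g.support) :
    f = coeff mg f • g := by
  have key : ∀ v : MvPolynomial (Fin n) K, v ∈ I → v ≠ 0 → v.support ⊆ g.support →
      mg ∈ v.support := by
    intro v hvI hv0 hvsub
    obtain ⟨mv, hlv⟩ := lead_exists hr hv0
    have hmem : monomial mv (1 : K) ∈ mIdeal K (leadSetG r G) := by
      rw [← hG.1.ini_eq]
      exact monomial_lead_mem_ini hvI hv0 hlv
    obtain ⟨s, hs, hsle⟩ := mem_mIdeal_support hmem mv (by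
      classical
      rw [MvPolynomial.support_monomial]
      simp)
    obtain ⟨h1, -⟩ := red_resolve hr hG hg hlg (hvsub hlv.1) hs hsle
    exact h1 ▸ hlv.1
  classical
  set c := coeff mg f with hc
  set u := f - c • g with hu
  have hgI : g ∈ I := hG.1.1 (Finset.mem_coe.mpr hg)
  have hcgI : c • g ∈ I := by
    rw [MvPolynomial.smul_eq_C_mul]
    exact Ideal.mul_mem_left _ _ hgI
  have huI : u ∈ I := Ideal.sub_mem _ hfI hcgI
  have hcoeff : coeff mg u = 0 := by
    rw [hu, MvPolynomial.coeff_sub, MvPolynomial.coeff_smul, hG.2.1 g hg mg hlg]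
    simp [hc]
  have husub : u.support ⊆ g.support := by
    intro m hm
    rcases Finset.mem_union.mp (MvPolynomial.support_sub _ _ _ hm) with h | h
    · exact hsub h
    · exact MvPolynomial.support_smul h
  by_cases hu0 : u = 0
  · have : f - c • g = 0 := hu ▸ hu0
    rw [sub_eq_zero] at this
    exact this
  · exact absurd (key u huI hu0 husub)
      (by simp [MvPolynomial.mem_support_iff, hcoeff])
end GBLemmas
section Hilbert
variable {K : Type*} [Field K] {n : ℕ} {r : (Fin n →₀ ℕ) → (Fin n →₀ ℕ) → Prop}

lemma finite_degree_set (n e : ℕ) : {m : Fin n →₀ ℕ | m.degree = e}.Finite := by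
  refine (Set.finite_Icc 0 (Finsupp.equivFunOnFinite.symm fun _ => e)).subset ?_
  intro m hm
  refine ⟨zero_le, ?_⟩
  rw [Finsupp.le_def]
  intro i
  rw [Finsupp.coe_equivFunOnFinite_symm]
  exact le_of_le_of_eq (Finsupp.le_degree i m) hm

lemma degree_eq_of_mem_support {f : MvPolynomial (Fin n) K} {e : ℕ}
    (hf : f.IsHomogeneous e) {m : Fin n →₀ ℕ} (hm : m ∈ f.support) : m.degree = e := by
  by_contra h
  exact MvPolynomial.mem_support_iff.mp hm (hf.coeff_eq_zero h)

lemma mem_degComp {I : Ideal (MvPolynomial (Fin n) K)} {e : ℕ} {f : MvPolynomial (Fin n) K} :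
    f ∈ degComp I e ↔ f ∈ I ∧ f.IsHomogeneous e := by
  rw [degComp, Submodule.mem_inf, Submodule.restrictScalars_mem, mem_homogeneousSubmodule]

/-- The set of leading exponents of nonzero elements of the degree-`e` part of `I`. -/
def Lset (r : (Fin n →₀ ℕ) → (Fin n →₀ ℕ) → Prop) (I : Ideal (MvPolynomial (Fin n) K)) (e : ℕ) :
    Set (Fin n →₀ ℕ) := {m | ∃ f ∈ degComp I e, f ≠ 0 ∧ leadOf r f m}

lemma Lset_subset (I : Ideal (MvPolynomial (Fin n) K)) (e : ℕ) :
    Lset r I e ⊆ {m : Fin n →₀ ℕ | m.degree = e} := by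
  rintro m ⟨f, hf, hf0, hl⟩
  exact degree_eq_of_mem_support (mem_degComp.mp hf).2 hl.1

lemma Lset_finite (I : Ideal (MvPolynomial (Fin n) K)) (e : ℕ) : (Lset r I e).Finite :=
  (finite_degree_set n e).subset (Lset_subset I e)

lemma degComp_ini_eq_span (hr : IsMonomialOrder n r) {I : Ideal (MvPolynomial (Fin n) K)}
    (hI : IsHomogIdeal I) (e : ℕ) :
    degComp (iniIdeal r I) e =
      Submodule.span K ((fun m => monomial m (1 : K)) '' Lset r I e) := by
  apply le_antisymm
  · -- hard direction
    intro f hf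
    obtain ⟨hfini, hfhom⟩ := mem_degComp.mp hf
    rw [f.as_sum]
    refine Submodule.sum_mem _ fun m hm => ?_
    have hmono : monomial m (coeff m f) = coeff m f • monomial m (1 : K) := by
      rw [MvPolynomial.smul_monomial, smul_eq_mul, mul_one]
    rw [hmono]
    refine Submodule.smul_mem _ _ (Submodule.subset_span ⟨m, ?_, rfl⟩)
    -- show m ∈ Lset r I e
    have hmdeg : m.degree = e := degree_eq_of_mem_support hfhom hm
    rw [iniIdeal_eq_mIdeal] at hfini
    obtain ⟨s, ⟨f₀, hf₀I, hf₀0, hlf₀⟩, hsle⟩ := mem_mIdeal_support hfini m hm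
    obtain ⟨c, rfl⟩ := le_iff_exists_add.mp hsle
    set g := monomial c (1 : K) * f₀ with hg
    have hgI : g ∈ I := Ideal.mul_mem_left _ _ hf₀I
    have hgco : ∀ v, coeff (c + v) g = coeff v f₀ := fun v => by
      rw [hg, MvPolynomial.coeff_monomial_mul, one_mul]
    have hmg : s + c ∈ g.support := by
      rw [MvPolynomial.mem_support_iff, add_comm s c, hgco]
      exact MvPolynomial.mem_support_iff.mp hlf₀.1
    have hglead : leadOf r g (s + c) := by
      refine ⟨hmg, fun m' hm' => ?_⟩
      classical
      obtain ⟨u, hu, v, hv, rfl⟩ := Finset.mem_add.mp (MvPolynomial.support_mul _ _ hm')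
      rw [MvPolynomial.support_monomial] at hu
      simp only [one_ne_zero, if_false, Finset.mem_singleton] at hu
      rw [hu]
      rcases hlf₀.2 v hv with h1 | h1
      · exact Or.inl (by rw [h1, add_comm])
      · refine Or.inr ?_
        rw [add_comm c v]
        exact hr.2.2.2.1 v s c h1
    set h := homogeneousComponent e g with hh
    have hhI : h ∈ I := hI g hgI e
    have hhsub : h.support ⊆ g.support := by
      intro m' hm'
      rw [MvPolynomial.mem_support_iff, hh, MvPolynomial.coeff_homogeneousComponent] at hm'
      rw [MvPolynomial.mem_support_iff]
      intro h0
      rw [h0] at hm'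
      simp at hm'
    have hmh : s + c ∈ h.support := by
      rw [MvPolynomial.mem_support_iff, hh, MvPolynomial.coeff_homogeneousComponent]
      rw [if_pos hmdeg]
      exact MvPolynomial.mem_support_iff.mp hmg
    have hh0 : h ≠ 0 := fun h0 => by simp [h0] at hmh
    exact ⟨h, mem_degComp.mpr ⟨hhI, homogeneousComponent_isHomogeneous e g⟩, hh0,
      hmh, fun m' hm' => hglead.2 m' (hhsub hm')⟩
  · rw [Submodule.span_le]
    rintro p ⟨m, ⟨f, hf, hf0, hl⟩, rfl⟩
    obtain ⟨hfI, hfhom⟩ := mem_degComp.mp hf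
    refine mem_degComp.mpr ⟨monomial_lead_mem_ini hfI hf0 hl, ?_⟩
    exact isHomogeneous_monomial 1 (degree_eq_of_mem_support hfhom hl.1)

lemma finrank_degComp_eq_card (hr : IsMonomialOrder n r) (I : Ideal (MvPolynomial (Fin n) K))
    (e : ℕ) :
    Module.finrank K (degComp I e) = Nat.card (Lset r I e) := by
  haveI := (Lset_finite (r := r) I e).fintype
  rw [Nat.card_eq_fintype_card]
  classical
  choose w hw using fun m : Lset r I e => m.2
  have hwmem : ∀ m : Lset r I e, w m ∈ degComp I e := fun m => (hw m).1
  have hwne : ∀ m : Lset r I e, w m ≠ 0 := fun m => (hw m).2.1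
  have hwlead : ∀ m : Lset r I e, leadOf r (w m) (m : Fin n →₀ ℕ) := fun m => (hw m).2.2
  have hlin : LinearIndependent K w := by
    rw [linearIndependent_iff]
    intro l hl
    by_contra hl0
    have hsne : (l.support.image (fun m : Lset r I e => (m : Fin n →₀ ℕ))).Nonempty := by
      rw [Finset.image_nonempty, Finset.nonempty_iff_ne_empty]
      simpa [Finsupp.support_eq_empty] using hl0
    obtain ⟨m, hm, hmax⟩ := finset_exists_max hr _ hsne
    obtain ⟨m₀, hm₀, rfl⟩ := Finset.mem_image.mp hm
    have hcoeff : coeff (m₀ : Fin n →₀ ℕ) (Finsupp.linearCombination K w l) =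
        l m₀ * coeff (m₀ : Fin n →₀ ℕ) (w m₀) := by
      rw [Finsupp.linearCombination_apply, Finsupp.sum]
      rw [MvPolynomial.coeff_sum]
      rw [Finset.sum_eq_single m₀]
      · rw [MvPolynomial.coeff_smul, smul_eq_mul]
      · intro i hi hine
        rw [MvPolynomial.coeff_smul, smul_eq_mul]
        have : coeff (m₀ : Fin n →₀ ℕ) (w i) = 0 := by
          by_contra hc
          have hmem := MvPolynomial.mem_support_iff.mpr hc
          rcases (hwlead i).2 _ hmem with h1 | h1
          · exact hine (Subtype.ext h1.symm ▸ rfl)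
          · rcases hmax (i : Fin n →₀ ℕ) (Finset.mem_image_of_mem _ hi) with h2 | h2
            · exact hine (Subtype.ext h2)
            · exact hr.asymm h1 h2
        rw [this, mul_zero]
      · intro h
        exact absurd hm₀ h
    rw [hl] at hcoeff
    simp only [MvPolynomial.coeff_zero] at hcoeff
    have : coeff (m₀ : Fin n →₀ ℕ) (w m₀) ≠ 0 :=
      MvPolynomial.mem_support_iff.mp (hwlead m₀).1
    exact Finsupp.mem_support_iff.mp hm₀ ((mul_eq_zero.mp hcoeff.symm).resolve_right this)
  have hspan : degComp I e = Submodule.span K (Set.range w) := by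
    apply le_antisymm
    · intro f hf
      haveI : IsTrans (Fin n →₀ ℕ) r := hr.2.1
      haveI : IsIrrefl (Fin n →₀ ℕ) r := hr.2.2.1
      haveI : IsStrictOrder (Fin n →₀ ℕ) r := ⟨⟩
      have hwf := (finite_degree_set n e).wellFoundedOn (r := r)
      rcases eq_or_ne f 0 with rfl | hf0
      · exact Submodule.zero_mem _
      obtain ⟨m, hlm⟩ := lead_exists hr hf0
      have hmdeg : m ∈ {m : Fin n →₀ ℕ | m.degree = e} :=
        degree_eq_of_mem_support (mem_degComp.mp hf).2 hlm.1
      have key : ∀ m' ∈ {m : Fin n →₀ ℕ | m.degree = e},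
          (∀ f' : MvPolynomial (Fin n) K, f' ∈ degComp I e → leadOf r f' m' →
            f' ∈ Submodule.span K (Set.range w)) := by
        intro m' hm'
        refine Set.WellFoundedOn.induction hwf hm' (P := fun y => ∀ f' : MvPolynomial (Fin n) K,
          f' ∈ degComp I e → leadOf r f' y → f' ∈ Submodule.span K (Set.range w)) ?_
        intro y hy IH f' hf' hlf'
        have hf'0 : f' ≠ 0 := fun h0 => by rw [h0] at hlf'; simpa using hlf'.1
        have hyL : y ∈ Lset r I e := ⟨f', hf', hf'0, hlf'⟩
        set y₀ : Lset r I e := ⟨y, hyL⟩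
        have hlc : coeff y (w y₀) ≠ 0 := MvPolynomial.mem_support_iff.mp (hwlead y₀).1
        set a := coeff y f' / coeff y (w y₀) with ha
        set u := f' - a • w y₀ with hu
        have huD : u ∈ degComp I e := Submodule.sub_mem _ hf' (Submodule.smul_mem _ _ (hwmem y₀))
        have hucoeff : coeff y u = 0 := by
          rw [hu, MvPolynomial.coeff_sub, MvPolynomial.coeff_smul, smul_eq_mul, ha,
            div_mul_cancel₀ _ hlc, sub_self]
        rcases eq_or_ne u 0 with hu0 | hu0
        · have : f' = a • w y₀ := by rwa [hu, sub_eq_zero] at hu0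
          rw [this]
          exact Submodule.smul_mem _ _ (Submodule.subset_span (Set.mem_range_self y₀))
        · obtain ⟨mu, hlmu⟩ := lead_exists hr hu0
          have hmuy : r mu y := by
            have hmune : mu ≠ y := fun h => by
              rw [h] at hlmu
              exact MvPolynomial.mem_support_iff.mp hlmu.1 hucoeff
            have hmem := hlmu.1
            rw [hu] at hmem
            classical
            rcases Finset.mem_union.mp (MvPolynomial.support_sub _ _ _ hmem) with h1 | h1
            · exact (hlf'.2 mu h1).resolve_left hmune
            · exact ((hwlead y₀).2 mu (MvPolynomial.support_smul h1)).resolve_left hmune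
          have hmudeg : mu ∈ {m : Fin n →₀ ℕ | m.degree = e} :=
            degree_eq_of_mem_support (mem_degComp.mp huD).2 hlmu.1
          have husp := IH mu hmudeg hmuy u huD hlmu
          have : f' = u + a • w y₀ := by rw [hu, sub_add_cancel]
          rw [this]
          exact Submodule.add_mem _ husp
            (Submodule.smul_mem _ _ (Submodule.subset_span (Set.mem_range_self y₀)))
      exact key m hmdeg f hf hlm
    · rw [Submodule.span_le]
      rintro p ⟨m, rfl⟩
      exact hwmem m
  rw [hspan]
  exact finrank_span_eq_card hlin

lemma finrank_degComp_ini_eq_card (hr : IsMonomialOrder n r)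
    {I : Ideal (MvPolynomial (Fin n) K)} (hI : IsHomogIdeal I) (e : ℕ) :
    Module.finrank K (degComp (iniIdeal r I) e) = Nat.card (Lset r I e) := by
  haveI := (Lset_finite (r := r) I e).fintype
  rw [Nat.card_eq_fintype_card]
  rw [degComp_ini_eq_span hr hI e]
  rw [Set.image_eq_range (fun m => monomial m (1 : K)) (Lset r I e)]
  refine finrank_span_eq_card ?_
  have : (fun m : Lset r I e => monomial (m : Fin n →₀ ℕ) (1 : K)) =
      (MvPolynomial.basisMonomials (Fin n) K) ∘ (fun m : Lset r I e => (m : Fin n →₀ ℕ)) := by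
    funext m
    simp [MvPolynomial.coe_basisMonomials]
  rw [this]
  exact (MvPolynomial.basisMonomials (Fin n) K).linearIndependent.comp _ Subtype.val_injective

lemma finiteDimensional_degComp_ini (hr : IsMonomialOrder n r)
    {I : Ideal (MvPolynomial (Fin n) K)} (hI : IsHomogIdeal I) (e : ℕ) :
    FiniteDimensional K (degComp (iniIdeal r I) e) := by
  rw [degComp_ini_eq_span hr hI e]
  exact FiniteDimensional.span_of_finite K ((Lset_finite I e).image _)

lemma finrank_degComp_ini (hr : IsMonomialOrder n r)
    {I : Ideal (MvPolynomial (Fin n) K)} (hI : IsHomogIdeal I) (e : ℕ) :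
    Module.finrank K (degComp (iniIdeal r I) e) = Module.finrank K (degComp I e) := by
  haveI := (Lset_finite (r := r) I e).fintype
  rw [finrank_degComp_ini_eq_card hr hI e, finrank_degComp_eq_card hr I e]

/-- Transfer of monomials between initial ideals with the same Hilbert function. -/
lemma ini_monomial_transfer (hr : IsMonomialOrder n r)
    {I J : Ideal (MvPolynomial (Fin n) K)} (hI : IsHomogIdeal I) (hJ : IsHomogIdeal J)
    (hilb : ∀ e : ℕ, Module.finrank K (degComp I e) = Module.finrank K (degComp J e))
    (hIJ : iniIdeal r I ≤ iniIdeal r J) {m : Fin n →₀ ℕ}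
    (hm : monomial m (1 : K) ∈ iniIdeal r J) : monomial m (1 : K) ∈ iniIdeal r I := by
  set e := m.degree with he
  haveI := finiteDimensional_degComp_ini hr hJ e
  have hle : degComp (iniIdeal r I) e ≤ degComp (iniIdeal r J) e := by
    intro x hx
    obtain ⟨h1, h2⟩ := mem_degComp.mp hx
    exact mem_degComp.mpr ⟨hIJ h1, h2⟩
  have hrank : Module.finrank K (degComp (iniIdeal r J) e) ≤
      Module.finrank K (degComp (iniIdeal r I) e) := by
    rw [finrank_degComp_ini hr hI e, finrank_degComp_ini hr hJ e, hilb e]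
  have heq := Submodule.eq_of_le_of_finrank_le hle hrank
  have : monomial m (1 : K) ∈ degComp (iniIdeal r J) e :=
    mem_degComp.mpr ⟨hm, isHomogeneous_monomial 1 he.symm⟩
  rw [← heq] at this
  exact (mem_degComp.mp this).1
end Hilbert
section Assembly
variable {K : Type*} [Field K] {n : ℕ} {r : (Fin n →₀ ℕ) → (Fin n →₀ ℕ) → Prop}

lemma mem_support_monomial_self (m : Fin n →₀ ℕ) : m ∈ (monomial m (1 : K)).support := by
  classical
  rw [MvPolynomial.support_monomial]
  simp
end Assembly
/-- Let `I, J` be homogeneous ideals with the same Hilbert function,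
`G₁, G₂` their reduced Gröbner bases with respect to a monomial order `r`, and `d` at least
the largest degree of an element of `G₁`.  If `cs(I_{≤d}) = cs(J_{≤d})`, then
`supp(G₁) = supp(G₂)`. -/
theorem supp_RGB_eq_of_cs_trunc_eq {K : Type*} [Field K] {n : ℕ}
    (r : (Fin n →₀ ℕ) → (Fin n →₀ ℕ) → Prop) (hr : IsMonomialOrder n r)
    (I J : Ideal (MvPolynomial (Fin n) K)) (hI : IsHomogIdeal I) (hJ : IsHomogIdeal J)
    (hilb : ∀ e : ℕ, Module.finrank K (degComp I e) = Module.finrank K (degComp J e))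
    (G₁ G₂ : Finset (MvPolynomial (Fin n) K)) (hG₁ : IsRGB r I G₁) (hG₂ : IsRGB r J G₂)
    (d : ℕ) (hd : ∀ f ∈ G₁, f.totalDegree ≤ d)
    (hcs : cs (trunc I d) = cs (trunc J d)) :
    (fun f : MvPolynomial (Fin n) K => f.support) '' (G₁ : Set (MvPolynomial (Fin n) K)) =
      (fun f : MvPolynomial (Fin n) K => f.support) '' (G₂ : Set (MvPolynomial (Fin n) K)) := by
  classical
  have hG0₁ : ∀ g ∈ G₁, g ≠ (0 : MvPolynomial (Fin n) K) := fun g hg h0 => hG₁.1.2.1 (h0 ▸ hg)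
  have hG0₂ : ∀ g ∈ G₂, g ≠ (0 : MvPolynomial (Fin n) K) := fun g hg h0 => hG₂.1.2.1 (h0 ▸ hg)
  -- supports of G₁ are minimal supports of trunc I d
  have hcsI : ∀ g ∈ G₁, g.support ∈ cs (trunc I d) := by
    intro g hg
    have hgI : g ∈ I := hG₁.1.1 (Finset.mem_coe.mpr hg)
    have hg0 := hG0₁ g hg
    obtain ⟨mg, hlg⟩ := lead_exists hr hg0
    refine ⟨⟨g, ⟨hgI, hd g hg⟩, hg0, rfl⟩, ?_⟩
    intro f hf hf0 hsub
    have heq := RGB_support_minimal hr hG₁ hg hlg hf.1 hf0 hsub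
    have hc : coeff mg f ≠ 0 := by
      intro h
      rw [h, zero_smul] at heq
      exact hf0 heq
    rw [heq]
    exact MvPolynomial.support_smul_eq hc g
  -- witnesses in J with the same support
  have hwit : ∀ g ∈ G₁, ∃ h, h ∈ J ∧ h ≠ 0 ∧ h.support = g.support := by
    intro g hg
    have hmem : g.support ∈ cs (trunc J d) := hcs ▸ hcsI g hg
    obtain ⟨⟨h, hh, hh0, hsup⟩, -⟩ := hmem
    exact ⟨h, hh.1, hh0, hsup⟩
  -- inclusion of initial ideals
  have hIJ : iniIdeal r I ≤ iniIdeal r J := by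
    rw [hG₁.1.ini_eq]
    unfold mIdeal
    rw [Ideal.span_le]
    rintro p ⟨m, ⟨g, hg, hlg⟩, rfl⟩
    obtain ⟨h, hhJ, hh0, hsup⟩ := hwit g hg
    exact monomial_lead_mem_ini hhJ hh0 (lead_congr hsup.symm hlg)
  -- transfer of lead monomials from ini J down to G₁ leads
  have htrans : ∀ m : Fin n →₀ ℕ, monomial m (1 : K) ∈ iniIdeal r J →
      ∃ g ∈ G₁, ∃ t, leadOf r g t ∧ t ≤ m := by
    intro m hm
    have h2 := ini_monomial_transfer hr hI hJ hilb hIJ hm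
    rw [hG₁.1.ini_eq] at h2
    obtain ⟨t, ⟨g, hg, hlt⟩, hle⟩ := mem_mIdeal_support h2 m (mem_support_monomial_self m)
    exact ⟨g, hg, t, hlt, hle⟩
  -- main correspondence
  have hcorr : ∀ g ∈ G₁, ∀ mg, leadOf r g mg →
      ∃ g' ∈ G₂, leadOf r g' mg ∧ g'.support = g.support := by
    intro g hg mg hlg
    obtain ⟨h, hhJ, hh0, hsup⟩ := hwit g hg
    have hlh : leadOf r h mg := lead_congr hsup.symm hlg
    have h1 : monomial mg (1 : K) ∈ iniIdeal r J := monomial_lead_mem_ini hhJ hh0 hlh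
    have h2 : monomial mg (1 : K) ∈ mIdeal K (leadSetG r G₂) := by
      rw [← hG₂.1.ini_eq]; exact h1
    obtain ⟨s, hsmem, hsle⟩ := mem_mIdeal_support h2 mg (mem_support_monomial_self mg)
    obtain ⟨g', hg', hlg'⟩ := hsmem
    have hg'0 := hG0₂ g' hg'
    have hs1 : monomial s (1 : K) ∈ iniIdeal r J :=
      monomial_lead_mem_ini (hG₂.1.1 (Finset.mem_coe.mpr hg')) hg'0 hlg'
    obtain ⟨g'', hg'', t, hlt, htle⟩ := htrans s hs1
    have hres := red_resolve hr hG₁ hg hlg hlg.1 (s := t) ⟨g'', hg'', hlt⟩ (htle.trans hsle)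
    have hsmg : s = mg := le_antisymm hsle (hres.2 ▸ htle)
    rw [hsmg] at hlg'
    -- show support equality via reduction
    have hmonic : coeff mg g' = 1 := hG₂.2.1 g' hg' mg hlg'
    set c := coeff mg h with hcdef
    set u := h - c • g' with hu
    have huJ : u ∈ J := by
      rw [hu, MvPolynomial.smul_eq_C_mul]
      exact Ideal.sub_mem _ hhJ (Ideal.mul_mem_left _ _ (hG₂.1.1 (Finset.mem_coe.mpr hg')))
    have hcu : coeff mg u = 0 := by
      rw [hu, MvPolynomial.coeff_sub, MvPolynomial.coeff_smul, hmonic, smul_eq_mul, mul_one,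
        hcdef, sub_self]
    have hu0 : u = 0 := by
      by_contra hu0
      obtain ⟨mu, hlmu⟩ := lead_exists hr hu0
      have hmus : mu ≠ mg := fun hmm => (MvPolynomial.mem_support_iff.mp (hmm ▸ hlmu.1)) hcu
      have h3 : monomial mu (1 : K) ∈ mIdeal K (leadSetG r G₂) := by
        rw [← hG₂.1.ini_eq]
        exact monomial_lead_mem_ini huJ hu0 hlmu
      obtain ⟨s2, hs2mem, hs2le⟩ := mem_mIdeal_support h3 mu (mem_support_monomial_self mu)
      have hmusup : mu ∈ h.support ∪ g'.support := by
        have hmem := hlmu.1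
        rw [hu] at hmem
        rcases Finset.mem_union.mp (MvPolynomial.support_sub _ _ _ hmem) with h4 | h4
        · exact Finset.mem_union_left _ h4
        · exact Finset.mem_union_right _ (MvPolynomial.support_smul h4)
      rcases Finset.mem_union.mp hmusup with hcase | hcase
      · rw [hsup] at hcase
        obtain ⟨g2, hg2, hlg2⟩ := hs2mem
        have h5 : monomial s2 (1 : K) ∈ iniIdeal r J :=
          monomial_lead_mem_ini (hG₂.1.1 (Finset.mem_coe.mpr hg2)) (hG0₂ g2 hg2) hlg2
        obtain ⟨g3, hg3, t3, hlt3, ht3le⟩ := htrans s2 h5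
        have hres2 := red_resolve hr hG₁ hg hlg hcase ⟨g3, hg3, hlt3⟩ (ht3le.trans hs2le)
        exact hmus hres2.1
      · have hres2 := red_resolve hr hG₂ hg' hlg' hcase hs2mem hs2le
        exact hmus hres2.1
    have hc0 : c ≠ 0 := by
      rw [hcdef]
      exact MvPolynomial.mem_support_iff.mp hlh.1
    have hhcg : h = c • g' := by
      rw [hu, sub_eq_zero] at hu0
      exact hu0
    refine ⟨g', hg', hlg', ?_⟩
    rw [← hsup, hhcg, MvPolynomial.support_smul_eq hc0]
  -- conclude
  refine Set.Subset.antisymm ?_ ?_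
  · rintro x ⟨g, hg, rfl⟩
    obtain ⟨mg, hlg⟩ := lead_exists hr (hG0₁ g (Finset.mem_coe.mp hg))
    obtain ⟨g', hg'2, hlg', hsup⟩ := hcorr g (Finset.mem_coe.mp hg) mg hlg
    exact ⟨g', Finset.mem_coe.mpr hg'2, hsup⟩
  · rintro x ⟨g', hg'c, rfl⟩
    have hg' : g' ∈ G₂ := Finset.mem_coe.mp hg'c
    have hg'0 := hG0₂ g' hg'
    obtain ⟨m', hlg'⟩ := lead_exists hr hg'0
    obtain ⟨g, hg, t, hlt, htle⟩ := htrans m'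
      (monomial_lead_mem_ini (hG₂.1.1 hg'c) hg'0 hlg')
    have h4 : monomial t (1 : K) ∈ mIdeal K (leadSetG r G₂) := by
      rw [← hG₂.1.ini_eq]
      exact hIJ (monomial_lead_mem_ini (hG₁.1.1 (Finset.mem_coe.mpr hg)) (hG0₁ g hg) hlt)
    obtain ⟨s, hsmem, hsle⟩ := mem_mIdeal_support h4 t (mem_support_monomial_self t)
    have hres := red_resolve hr hG₂ hg' hlg' hlg'.1 hsmem (hsle.trans htle)
    have ht : t = m' := le_antisymm htle (hres.2 ▸ hsle)
    rw [ht] at hlt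
    obtain ⟨g'', hg''2, hlg'', hsup⟩ := hcorr g hg m' hlt
    have hgg : g'' = g' := by
      by_contra hne
      exact hG₂.2.2 g'' hg''2 g' hg' hne m' hlg'' m' hlg'.1 (le_refl m')
    exact ⟨g, Finset.mem_coe.mpr hg, show g.support = g'.support by rw [← hsup, hgg]⟩
end

section
/- Let K be an infinite field, d a positive integer, and I ⊆ A = K[X_1,...,X_n] a homogeneous ideal. Then there exists a nonempty Zariski open subset U ⊆ GL_n(K) such that gcs(I_{≤d}) = cs(gI_{≤d}) for all g ∈ U, where gcs(I_{≤d}) := cs(γ I_{≤d}) for the generic change of coordinates γ over K(y_{ij}). -/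
open MvPolynomial

/-- The coefficient field `K(y_{ij})` of the generic change of coordinates. -/
abbrev GenField (K : Type*) [Field K] (n : ℕ) : Type _ :=
  FractionRing (MvPolynomial (Fin n × Fin n) K)

/-- The generic coordinate `y_{ij} ∈ K(y)`. -/
noncomputable def yCoord {K : Type*} [Field K] {n : ℕ} (i j : Fin n) : GenField K n :=
  algebraMap (MvPolynomial (Fin n × Fin n) K) (GenField K n) (X (i, j))

/-- The generic change of coordinates `γ : K[X] → K(y)[X]`, `X_i ↦ Σ_j y_{ij} X_j`. -/
noncomputable def genericMap (K : Type*) [Field K] (n : ℕ) :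
    MvPolynomial (Fin n) K →+* MvPolynomial (Fin n) (GenField K n) :=
  eval₂Hom ((C : GenField K n →+* MvPolynomial (Fin n) (GenField K n)).comp
      ((algebraMap (MvPolynomial (Fin n × Fin n) K) (GenField K n)).comp (C : K →+* _)))
    (fun i => ∑ j, C (yCoord i j) * X j)

/-- The change of coordinates of `K[X]` associated to a matrix `g`. -/
noncomputable def cc {K : Type*} [Field K] {n : ℕ} (g : Matrix (Fin n) (Fin n) K) :
    MvPolynomial (Fin n) K →ₐ[K] MvPolynomial (Fin n) K :=
  aeval (fun i => ∑ j, C (g i j) * X j)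

/-- Evaluation of a polynomial in the variables `y_{ij}` at a matrix `g`. -/
noncomputable def evalMat {K : Type*} [Field K] {n : ℕ}
    (p : MvPolynomial (Fin n × Fin n) K) (g : Matrix (Fin n) (Fin n) K) : K :=
  eval (fun ij => g ij.1 ij.2) p

section Aux

open Submodule Set Module Finset

/-- `cs` only depends on which finsets contain the support of a nonzero element. -/
theorem cs_char {σ R : Type*} [CommSemiring R] (S : Set (MvPolynomial σ R)) :
    cs S = {s | (∃ f ∈ S, f ≠ 0 ∧ f.support ⊆ s) ∧
        ∀ t : Finset (σ →₀ ℕ), (∃ f ∈ S, f ≠ 0 ∧ f.support ⊆ t) → t ⊆ s → t = s} := by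
  ext s
  constructor
  · rintro ⟨⟨f, hf, hf0, hsupp⟩, hmin⟩
    refine ⟨⟨f, hf, hf0, hsupp ▸ le_refl _⟩, ?_⟩
    rintro t ⟨g, hg, hg0, hgt⟩ hts
    have := hmin g hg hg0 (hgt.trans hts)
    exact le_antisymm hts (this ▸ hgt)
  · rintro ⟨⟨f, hf, hf0, hfs⟩, hmin⟩
    constructor
    · exact ⟨f, hf, hf0, hmin f.support ⟨f, hf, hf0, le_refl _⟩ hfs⟩
    · intro g hg hg0 hgs
      exact hmin g.support ⟨g, hg, hg0, le_refl _⟩ hgs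

/-- `cs` only depends on which finsets contain the support of a nonzero element. -/
theorem cs_congr {σ R1 R2 : Type*} [CommSemiring R1] [CommSemiring R2]
    {S1 : Set (MvPolynomial σ R1)} {S2 : Set (MvPolynomial σ R2)}
    (h : ∀ s : Finset (σ →₀ ℕ),
      (∃ f ∈ S1, f ≠ 0 ∧ f.support ⊆ s) ↔ (∃ f ∈ S2, f ≠ 0 ∧ f.support ⊆ s)) :
    cs S1 = cs S2 := by
  rw [cs_char, cs_char]
  ext s
  simp only [Set.mem_setOf_eq, h]

variable {F : Type*} [Field F]

theorem exists_comp_linearIndependent {V : Type*} [AddCommGroup V] [Module F V]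
    [FiniteDimensional F V] {ι : Type*} (w : ι → V) {t : ℕ}
    (h : t ≤ finrank F (span F (Set.range w))) :
    ∃ sel : Fin t → ι, LinearIndependent F (w ∘ sel) := by
  obtain ⟨b, hbsub, hbspan, hbind⟩ := exists_linearIndependent F (Set.range w)
  have hbfin : b.Finite := hbind.setFinite
  haveI : Fintype b := hbfin.fintype
  have hcard : finrank F (span F b) = b.toFinset.card := finrank_span_set_eq_card hbind
  have htle : t ≤ Fintype.card b := by
    rw [hbspan] at hcard
    rw [← Set.toFinset_card]
    omega
  obtain ⟨e⟩ : Nonempty (Fin t ↪ b) := by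
    apply Function.Embedding.nonempty_iff_card_le.mpr
    simpa using htle
  have hind : LinearIndependent F (fun a : Fin t => ((e a : b) : V)) :=
    hbind.comp e e.injective
  have hmem : ∀ a : Fin t, ((e a : b) : V) ∈ Set.range w := fun a => hbsub (e a).2
  choose sel hsel using hmem
  refine ⟨sel, ?_⟩
  have : w ∘ sel = fun a : Fin t => ((e a : b) : V) := funext fun a => hsel a
  rw [this]
  exact hind

theorem le_finrank_of_minor {m : ℕ} {J : Type*} [Fintype J] {w : Fin m → J → F} {t : ℕ}
    {rows : Fin t → Fin m} {colsf : Fin t → J}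
    (h : (Matrix.of fun a b => w (rows a) (colsf b)).det ≠ 0) :
    t ≤ finrank F (span F (Set.range w)) := by
  have hunit : IsUnit (Matrix.of fun a b => w (rows a) (colsf b)) :=
    (Matrix.isUnit_iff_isUnit_det _).mpr (isUnit_iff_ne_zero.mpr h)
  have hrows : LinearIndependent F (fun a => (Matrix.of fun a b => w (rows a) (colsf b)) a) :=
    Matrix.linearIndependent_rows_iff_isUnit.mpr hunit
  have hcomp : (fun a => (Matrix.of fun a b => w (rows a) (colsf b)) a) =
      (LinearMap.funLeft F F colsf) ∘ (fun a => w (rows a)) := rfl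
  rw [hcomp] at hrows
  have hind : LinearIndependent F (fun a => w (rows a)) := hrows.of_comp _
  calc t = finrank F (span F (Set.range fun a => w (rows a))) := by
        rw [finrank_span_eq_card hind, Fintype.card_fin]
    _ ≤ finrank F (span F (Set.range w)) := by
        apply Submodule.finrank_mono
        apply span_mono
        rintro _ ⟨a, rfl⟩
        exact ⟨rows a, rfl⟩

theorem exists_minor_of_le_finrank {m : ℕ} {J : Type*} [Fintype J] {w : Fin m → J → F} {t : ℕ}
    (h : t ≤ finrank F (span F (Set.range w))) :
    ∃ (rows : Fin t → Fin m) (colsf : Fin t → J),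
      (Matrix.of fun a b => w (rows a) (colsf b)).det ≠ 0 := by
  obtain ⟨rows, hrows⟩ := exists_comp_linearIndependent w h
  set u : Fin t → J → F := w ∘ rows with hu
  -- column family
  have hrank : t ≤ finrank F (span F (Set.range fun j : J => fun a : Fin t => u a j)) := by
    have h1 : (Matrix.of fun a j => u a j).rank = finrank F (span F (Set.range u)) := by
      rw [Matrix.rank_eq_finrank_span_row]; rfl
    have h2 : (Matrix.of fun a j => u a j).rank
        = finrank F (span F (Set.range fun j : J => fun a : Fin t => u a j)) := by
      rw [Matrix.rank_eq_finrank_span_cols]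
      rfl
    calc t = finrank F (span F (Set.range u)) := by
          rw [finrank_span_eq_card hrows, Fintype.card_fin]
      _ ≤ _ := le_of_eq (by rw [← h1, h2])
  obtain ⟨colsf, hcols⟩ := exists_comp_linearIndependent (fun j : J => fun a : Fin t => u a j) hrank
  refine ⟨rows, colsf, ?_⟩
  have hunit : IsUnit (Matrix.of fun a b => u a (colsf b)) := by
    apply Matrix.linearIndependent_cols_iff_isUnit.mp
    exact hcols
  have := (Matrix.isUnit_iff_isUnit_det _).mp hunit
  exact this.ne_zero

theorem exists_combo_iff_finrank_ne {m : ℕ} {J J' : Type*} [Fintype J] [Fintype J']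
    (C : Fin m → J → F) (C' : Fin m → J' → F) (ρ : J' → J)
    (hρ : ∀ i j', C' i j' = C i (ρ j')) :
    (∃ c : Fin m → F, (∑ i, c i • C i) ≠ 0 ∧ (∑ i, c i • C' i) = 0) ↔
      finrank F (span F (Set.range C')) ≠ finrank F (span F (Set.range C)) := by
  let L1 : (Fin m → F) →ₗ[F] (J → F) := Fintype.linearCombination F C
  let L2 : (Fin m → F) →ₗ[F] (J' → F) := Fintype.linearCombination F C'
  have hL1 : ∀ c, L1 c = ∑ i, c i • C i := fun c => rfl
  have hL2 : ∀ c, L2 c = ∑ i, c i • C' i := fun c => rfl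
  have hrange1 : LinearMap.range L1 = span F (Set.range C) := by
    apply le_antisymm
    · rintro _ ⟨c, rfl⟩
      rw [hL1]
      exact Submodule.sum_mem _ fun i _ => Submodule.smul_mem _ _ (subset_span ⟨i, rfl⟩)
    · rw [span_le]
      rintro _ ⟨i, rfl⟩
      exact ⟨Pi.single i 1, by simp [hL1, Pi.single_apply, ite_smul]⟩
  have hrange2 : LinearMap.range L2 = span F (Set.range C') := by
    apply le_antisymm
    · rintro _ ⟨c, rfl⟩
      rw [hL2]
      exact Submodule.sum_mem _ fun i _ => Submodule.smul_mem _ _ (subset_span ⟨i, rfl⟩)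
    · rw [span_le]
      rintro _ ⟨i, rfl⟩
      exact ⟨Pi.single i 1, by simp [hL2, Pi.single_apply, ite_smul]⟩
  have hker : LinearMap.ker L1 ≤ LinearMap.ker L2 := by
    intro c hc
    rw [LinearMap.mem_ker] at hc ⊢
    rw [hL2]
    rw [hL1] at hc
    funext j'
    have := congrFun hc (ρ j')
    simpa [Finset.sum_apply, hρ] using this
  have key : (∃ c : Fin m → F, L1 c ≠ 0 ∧ L2 c = 0) ↔
      LinearMap.ker L2 ≠ LinearMap.ker L1 := by
    constructor
    · rintro ⟨c, hc1, hc2⟩ heq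
      exact hc1 (heq ▸ (LinearMap.mem_ker.mpr hc2) : c ∈ LinearMap.ker L1)
    · intro hne
      have : ¬ (LinearMap.ker L2 ≤ LinearMap.ker L1) := fun hle =>
        hne (le_antisymm hle hker)
      obtain ⟨c, hc2, hc1⟩ := SetLike.not_le_iff_exists.mp this
      exact ⟨c, fun h => hc1 (LinearMap.mem_ker.mpr h), LinearMap.mem_ker.mp hc2⟩
  have rn1 : finrank F (LinearMap.range L1) + finrank F (LinearMap.ker L1)
      = m := by rw [LinearMap.finrank_range_add_finrank_ker]; simp [finrank_pi]
  have rn2 : finrank F (LinearMap.range L2) + finrank F (LinearMap.ker L2)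
      = m := by rw [LinearMap.finrank_range_add_finrank_ker]; simp [finrank_pi]
  have kerfr : LinearMap.ker L2 ≠ LinearMap.ker L1 ↔
      finrank F (LinearMap.ker L2) ≠ finrank F (LinearMap.ker L1) := by
    constructor
    · intro hne hfr
      exact hne (Submodule.eq_of_le_of_finrank_eq hker hfr.symm).symm
    · intro hfr hne
      exact hfr (by rw [hne])
  simp only [hL1, hL2] at key
  rw [key, kerfr, ← hrange1, ← hrange2]
  omega

theorem exists_poly_rank_spec {R : Type*} [CommRing R] [IsDomain R] {K : Type*} [Field K]
    (ι : R →+* F) (hι : Function.Injective ι) {m : ℕ} {J : Type*} [Fintype J]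
    (B : Fin m → J → R) :
    ∃ p : R, p ≠ 0 ∧ ∀ ψ : R →+* K, ψ p ≠ 0 →
      finrank K (span K (Set.range fun i => fun j => ψ (B i j))) =
      finrank F (span F (Set.range fun i => fun j => ι (B i j))) := by
  set r := finrank F (span F (Set.range fun i => fun j => ι (B i j))) with hr
  obtain ⟨rows, colsf, hdet⟩ := exists_minor_of_le_finrank (w := fun i j => ι (B i j)) le_rfl
  refine ⟨(Matrix.of fun a b => B (rows a) (colsf b)).det, ?_, ?_⟩
  · intro h0
    apply hdet
    have : (Matrix.of fun a b => ι (B (rows a) (colsf b)))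
        = ι.mapMatrix (Matrix.of fun a b => B (rows a) (colsf b)) := rfl
    rw [this, ← RingHom.map_det, h0, map_zero]
  · intro ψ hψ
    have hge : r ≤ finrank K (span K (Set.range fun i => fun j => ψ (B i j))) := by
      apply le_finrank_of_minor (rows := rows) (colsf := colsf)
      have : (Matrix.of fun a b => ψ (B (rows a) (colsf b)))
          = ψ.mapMatrix (Matrix.of fun a b => B (rows a) (colsf b)) := rfl
      rw [this, ← RingHom.map_det]
      exact hψ
    refine le_antisymm ?_ hge
    by_contra hlt
    push_neg at hlt
    obtain ⟨rows', colsf', hdet'⟩ :=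
      exists_minor_of_le_finrank (w := fun i j => ψ (B i j)) (Nat.succ_le_of_lt hlt)
    have hq : (Matrix.of fun a b => B (rows' a) (colsf' b)).det ≠ 0 := by
      intro h0
      apply hdet'
      have : (Matrix.of fun (a : Fin (r+1)) b => ψ (B (rows' a) (colsf' b)))
          = ψ.mapMatrix (Matrix.of fun a b => B (rows' a) (colsf' b)) := rfl
      rw [this, ← RingHom.map_det, h0, map_zero]
    have hF : (Matrix.of fun (a : Fin (r+1)) b => ι (B (rows' a) (colsf' b))).det ≠ 0 := by
      have : (Matrix.of fun (a : Fin (r+1)) b => ι (B (rows' a) (colsf' b)))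
          = ι.mapMatrix (Matrix.of fun a b => B (rows' a) (colsf' b)) := rfl
      rw [this, ← RingHom.map_det]
      intro h0
      exact hq (hι (by simpa using h0))
    have := le_finrank_of_minor (w := fun i j => ι (B i j)) hF
    omega


section Poly

variable {F : Type*} [Field F]

theorem totalDegree_eval₂_le' {σ τ R S : Type*} [CommSemiring R] [CommSemiring S]
    (f : R →+* MvPolynomial τ S) (hf : ∀ r, (f r).totalDegree = 0)
    (g : σ → MvPolynomial τ S) (hg : ∀ i, (g i).totalDegree ≤ 1)
    (q : MvPolynomial σ R) :
    (eval₂ f g q).totalDegree ≤ q.totalDegree := by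
  rw [eval₂_eq]
  refine (totalDegree_finset_sum _ _).trans ?_
  apply Finset.sup_le
  intro d hd
  refine (totalDegree_mul _ _).trans ?_
  rw [hf, zero_add]
  refine (totalDegree_finset_prod _ _).trans ?_
  calc ∑ i ∈ d.support, ((g i) ^ d i).totalDegree
      ≤ ∑ i ∈ d.support, d i * 1 := by
        apply Finset.sum_le_sum
        intro i _
        exact (totalDegree_pow _ _).trans (Nat.mul_le_mul_left _ (hg i))
    _ ≤ q.totalDegree := by
        simp only [mul_one]
        exact le_totalDegree hd

theorem totalDegree_cc_le {n : ℕ} (g : Matrix (Fin n) (Fin n) F)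
    (q : MvPolynomial (Fin n) F) : (cc g q).totalDegree ≤ q.totalDegree := by
  apply totalDegree_eval₂_le'
  · intro r; exact totalDegree_C r
  intro i
  refine (totalDegree_finset_sum _ _).trans ?_
  apply Finset.sup_le
  intro j _
  refine (totalDegree_mul _ _).trans ?_
  rw [totalDegree_C, zero_add]
  exact (totalDegree_X _).le

theorem cc_cc (g h : Matrix (Fin n) (Fin n) F) :
    (cc h).comp (cc g) = cc (g * h) := by
  apply MvPolynomial.algHom_ext
  intro i
  simp only [AlgHom.comp_apply, cc, aeval_X, map_sum, map_mul, aeval_C, algebraMap_eq]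
  simp only [Finset.mul_sum, ← mul_assoc, ← C_mul]
  rw [Finset.sum_comm]
  refine Finset.sum_congr rfl fun j _ => ?_
  rw [Matrix.mul_apply, ← Finset.sum_mul]
  congr 1
  rw [map_sum]


theorem cc_one {n : ℕ} : cc (1 : Matrix (Fin n) (Fin n) F) = AlgHom.id F _ := by
  apply MvPolynomial.algHom_ext
  intro i
  simp [cc, Matrix.one_apply, apply_ite (C : F → MvPolynomial (Fin n) F), ite_mul]

theorem cc_inv_cc {n : ℕ} {g : Matrix (Fin n) (Fin n) F} (hg : g.det ≠ 0)
    (q : MvPolynomial (Fin n) F) : cc g⁻¹ (cc g q) = q := by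
  have := congrArg (fun φ : MvPolynomial (Fin n) F →ₐ[F] MvPolynomial (Fin n) F => φ q)
    (cc_cc g g⁻¹)
  simp only [AlgHom.comp_apply] at this
  rw [this, Matrix.mul_nonsing_inv g (isUnit_iff_ne_zero.mpr hg), cc_one]
  rfl

theorem cc_cc_inv {n : ℕ} {g : Matrix (Fin n) (Fin n) F} (hg : g.det ≠ 0)
    (q : MvPolynomial (Fin n) F) : cc g (cc g⁻¹ q) = q := by
  have := congrArg (fun φ : MvPolynomial (Fin n) F →ₐ[F] MvPolynomial (Fin n) F => φ q)
    (cc_cc g⁻¹ g)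
  simp only [AlgHom.comp_apply] at this
  rw [this, Matrix.nonsing_inv_mul g (isUnit_iff_ne_zero.mpr hg), cc_one]
  rfl

theorem map_cc_eq_map_toRingHom {n : ℕ} (g : Matrix (Fin n) (Fin n) F)
    (I : Ideal (MvPolynomial (Fin n) F)) :
    Ideal.map (cc g) I = Ideal.map (cc g).toRingHom I := rfl

theorem trunc_map_cc {n : ℕ} (g : Matrix (Fin n) (Fin n) F) (hg : g.det ≠ 0)
    (I : Ideal (MvPolynomial (Fin n) F)) (d : ℕ) :
    trunc (Ideal.map (cc g) I) d = (cc g) '' (trunc I d) := by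
  ext q
  constructor
  · rintro ⟨hq, hdeg⟩
    refine ⟨cc g⁻¹ q, ⟨?_, (totalDegree_cc_le g⁻¹ q).trans hdeg⟩, cc_cc_inv hg q⟩
    have hmem : cc g⁻¹ q ∈ Ideal.map (cc g⁻¹).toRingHom (Ideal.map (cc g).toRingHom I) :=
      Ideal.mem_map_of_mem _ hq
    rw [Ideal.map_map] at hmem
    have hcomp : (cc g⁻¹).toRingHom.comp (cc g).toRingHom = RingHom.id _ := by
      have := congrArg AlgHom.toRingHom (cc_cc g g⁻¹)
      rw [Matrix.mul_nonsing_inv g (isUnit_iff_ne_zero.mpr hg), cc_one] at this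
      exact this
    rwa [hcomp, Ideal.map_id] at hmem
  · rintro ⟨f, ⟨hfI, hdeg⟩, rfl⟩
    exact ⟨Ideal.mem_map_of_mem _ hfI, (totalDegree_cc_le g f).trans hdeg⟩

theorem homogeneousComponent_map' {σ R S : Type*} [CommSemiring R] [CommSemiring S]
    (f : R →+* S) (e : ℕ) (q : MvPolynomial σ R) :
    homogeneousComponent e (MvPolynomial.map f q)
      = MvPolynomial.map f (homogeneousComponent e q) := by
  ext t
  simp only [coeff_homogeneousComponent, coeff_map]
  split_ifs <;> simp

theorem totalDegree_map_le' {σ R S : Type*} [CommSemiring R] [CommSemiring S]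
    (f : R →+* S) (q : MvPolynomial σ R) :
    (MvPolynomial.map f q).totalDegree ≤ q.totalDegree :=
  Finset.sup_mono (support_map_subset _ _)

section BaseChange

variable {σ : Type*} {L : Type*} [Field L] (φ : F →+* L)

theorem map_ideal_coe_eq_span (I : Ideal (MvPolynomial σ F)) :
    (Ideal.map (MvPolynomial.map φ) I : Set (MvPolynomial σ L)) =
      ↑(span L ((MvPolynomial.map φ) '' (I : Set (MvPolynomial σ F)))) := by
  set β := MvPolynomial.map φ
  apply Set.Subset.antisymm
  · have hX : ∀ (i : σ), ∀ x ∈ span L (β '' (I : Set _)), X i * x ∈ span L (β '' (I : Set _)) := by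
      intro i x hx
      induction hx using Submodule.span_induction with
      | mem y hy =>
        obtain ⟨f, hf, rfl⟩ := hy
        have : X i * β f = β (X i * f) := by rw [map_mul, MvPolynomial.map_X]
        rw [this]
        exact subset_span ⟨X i * f, I.mul_mem_left _ hf, rfl⟩
      | zero => rw [mul_zero]; exact zero_mem _
      | add y z _ _ hy hz => rw [mul_add]; exact add_mem hy hz
      | smul a y _ hy => rw [mul_smul_comm]; exact Submodule.smul_mem _ _ hy
    have hmul : ∀ (r : MvPolynomial σ L), ∀ x ∈ span L (β '' (I : Set _)),
        r * x ∈ span L (β '' (I : Set _)) := by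
      intro r
      induction r using MvPolynomial.induction_on with
      | C a => intro x hx; rw [← smul_eq_C_mul]; exact Submodule.smul_mem _ _ hx
      | add p q hp hq => intro x hx; rw [add_mul]; exact add_mem (hp x hx) (hq x hx)
      | mul_X p i hp => intro x hx; rw [mul_assoc]; exact hp _ (hX i x hx)
    intro q hq
    have hq' : q ∈ Ideal.span (β '' (I : Set _)) := hq
    clear hq
    induction hq' using Submodule.span_induction with
    | mem y hy => exact subset_span hy
    | zero => exact zero_mem _
    | add y z _ _ hy hz => exact add_mem hy hz
    | smul a y _ hy => rw [smul_eq_mul]; exact hmul a y hy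
  · have : span L (β '' (I : Set _)) ≤
        (Ideal.map β I).restrictScalars L := by
      rw [span_le]
      rintro _ ⟨f, hf, rfl⟩
      exact Ideal.mem_map_of_mem β hf
    exact this

theorem trunc_map_basechange (I : Ideal (MvPolynomial σ F)) (hI : IsHomogIdeal I) (d : ℕ) :
    trunc (Ideal.map (MvPolynomial.map φ) I) d =
      ↑(span L ((MvPolynomial.map φ) '' (trunc I d))) := by
  set β := MvPolynomial.map φ
  have hcomp : ∀ (e : ℕ), e ≤ d → ∀ x ∈ span L (β '' (I : Set _)),
      homogeneousComponent e x ∈ span L (β '' (trunc I d)) := by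
    intro e he x hx
    induction hx using Submodule.span_induction with
    | mem y hy =>
      obtain ⟨f, hf, rfl⟩ := hy
      rw [homogeneousComponent_map']
      refine subset_span ⟨homogeneousComponent e f, ⟨hI f hf e, ?_⟩, rfl⟩
      exact ((homogeneousComponent_isHomogeneous e f).totalDegree_le).trans he
    | zero => rw [map_zero]; exact zero_mem _
    | add y z _ _ hy hz => rw [map_add]; exact add_mem hy hz
    | smul a y _ hy => rw [map_smul]; exact Submodule.smul_mem _ _ hy
  apply Set.Subset.antisymm
  · rintro q ⟨hq, hdeg⟩
    have hq' : q ∈ span L (β '' (I : Set _)) := by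
      rw [← SetLike.mem_coe, ← map_ideal_coe_eq_span]
      exact hq
    have hsum := sum_homogeneousComponent q
    rw [← hsum]
    apply Submodule.sum_mem
    intro e he
    rw [Finset.mem_range, Nat.lt_succ_iff] at he
    exact hcomp e (he.trans hdeg) q hq'
  · intro x hx
    have hdeg : x.totalDegree ≤ d := by
      induction hx using Submodule.span_induction with
      | mem y hy =>
        obtain ⟨f, ⟨_, hfd⟩, rfl⟩ := hy
        exact (totalDegree_map_le' φ f).trans hfd
      | zero => simp
      | add y z _ _ hy hz => exact (totalDegree_add y z).trans (max_le hy hz)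
      | smul a y _ hy => exact (totalDegree_smul_le a y).trans hy
    have hmem : x ∈ Ideal.map β I := by
      have h1 : span L (β '' (trunc I d)) ≤ (Ideal.map β I).restrictScalars L := by
        rw [span_le]
        rintro _ ⟨f, hf, rfl⟩
        exact Ideal.mem_map_of_mem β hf.1
      exact h1 hx
    exact ⟨hmem, hdeg⟩

end BaseChange

theorem finrank_span_range_comp_equiv {m : ℕ} {J J' : Type*} [Fintype J] [Fintype J']
    (e : J' ≃ J) (C : Fin m → J → F) :
    finrank F (span F (Set.range fun i => (C i) ∘ e)) = finrank F (span F (Set.range C)) := by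
  let E : (J → F) ≃ₗ[F] (J' → F) := LinearEquiv.funCongrLeft F F e
  have h1 : (Set.range fun i => (C i) ∘ e) = E '' (Set.range C) := by
    rw [← Set.range_comp]
    rfl
  rw [h1, show ⇑E = ⇑(E : (J → F) →ₗ[F] (J' → F)) from rfl, ← Submodule.map_span]
  exact LinearEquiv.finrank_map_eq E _


theorem exists_mem_span_support_subset_iff {σ R : Type*} [CommRing R]
    (φ : R →+* F) {m : ℕ} (w : Fin m → MvPolynomial σ R)
    (Tf : Finset (σ →₀ ℕ)) (hT : ∀ i, (w i).support ⊆ Tf)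
    (s : Finset (σ →₀ ℕ)) :
    (∃ q ∈ (span F (Set.range fun i => MvPolynomial.map φ (w i)) : Set (MvPolynomial σ F)),
        q ≠ 0 ∧ q.support ⊆ s) ↔
      finrank F (span F (Set.range fun i =>
          fun j : {j : {x // x ∈ Tf} // (j : σ →₀ ℕ) ∉ s} =>
            φ (coeff (j : σ →₀ ℕ) (w i)))) ≠
      finrank F (span F (Set.range fun i => fun j : {x // x ∈ Tf} =>
        φ (coeff (j : σ →₀ ℕ) (w i)))) := by
  classical
  set C : Fin m → {x // x ∈ Tf} → F := fun i j => φ (coeff (j : σ →₀ ℕ) (w i)) with hC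
  set C' : Fin m → {j : {x // x ∈ Tf} // (j : σ →₀ ℕ) ∉ s} → F := fun i j => C i j.1 with hC'
  rw [← exists_combo_iff_finrank_ne C C' Subtype.val (fun i j' => rfl)]
  have key : ∀ (c : Fin m → F) (t : σ →₀ ℕ),
      coeff t (∑ i, c i • MvPolynomial.map φ (w i)) = ∑ i, c i * φ (coeff t (w i)) := by
    intro c t
    rw [MvPolynomial.coeff_sum]
    refine Finset.sum_congr rfl fun i _ => ?_
    rw [coeff_smul, coeff_map]
    rfl
  have hout : ∀ (c : Fin m → F) (t : σ →₀ ℕ), t ∉ Tf →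
      coeff t (∑ i, c i • MvPolynomial.map φ (w i)) = 0 := by
    intro c t ht
    rw [key]
    apply Finset.sum_eq_zero
    intro i _
    have : coeff t (w i) = 0 := by
      by_contra hne
      exact ht (hT i (mem_support_iff.mpr hne))
    rw [this, map_zero, mul_zero]
  have happ : ∀ (c : Fin m → F) (j : {x // x ∈ Tf}),
      (∑ i, c i • C i) j = coeff (j : σ →₀ ℕ) (∑ i, c i • MvPolynomial.map φ (w i)) := by
    intro c j
    rw [key]
    simp [Finset.sum_apply, hC]
  constructor
  · rintro ⟨q, hq, hq0, hqs⟩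
    rw [SetLike.mem_coe, mem_span_range_iff_exists_fun] at hq
    obtain ⟨c, rfl⟩ := hq
    refine ⟨c, ?_, ?_⟩
    · intro hzero
      apply hq0
      ext t
      by_cases ht : t ∈ Tf
      · rw [← happ c ⟨t, ht⟩, hzero]
        simp
      · rw [hout c t ht]
        simp
    · funext j
      have h1 : (∑ i, c i • C' i) j = (∑ i, c i • C i) j.1 := by
        simp [hC', Finset.sum_apply]
      rw [h1, happ]
      have : (j.1 : σ →₀ ℕ) ∉ (∑ i, c i • MvPolynomial.map φ (w i)).support :=
        fun hmem => j.2 (hqs hmem)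
      simpa [Pi.zero_apply] using notMem_support_iff.mp this
  · rintro ⟨c, hc1, hc2⟩
    refine ⟨∑ i, c i • MvPolynomial.map φ (w i), ?_, ?_, ?_⟩
    · rw [SetLike.mem_coe, mem_span_range_iff_exists_fun]
      exact ⟨c, rfl⟩
    · intro hzero
      apply hc1
      funext j
      rw [happ c j, hzero]
      simp
    · intro t hts
      by_contra hns
      have htf : t ∈ Tf := by
        by_contra htf
        exact (notMem_support_iff.mpr (hout c t htf)) hts
      have := congrFun hc2 ⟨⟨t, htf⟩, hns⟩
      have h1 : (∑ i, c i • C' i) ⟨⟨t, htf⟩, hns⟩ = (∑ i, c i • C i) ⟨t, htf⟩ := by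
        simp [hC', Finset.sum_apply]
      rw [h1, happ] at this
      exact (mem_support_iff.mp hts) this

theorem exists_matrix_evalMat_ne_zero {K : Type*} [Field K] [Infinite K] {n : ℕ}
    {p : MvPolynomial (Fin n × Fin n) K} (hp : p ≠ 0) :
    ∃ g : Matrix (Fin n) (Fin n) K, evalMat p g ≠ 0 := by
  by_contra h
  push_neg at h
  apply hp
  apply MvPolynomial.funext
  intro x
  have := h (Matrix.of fun i j => x (i, j))
  have hx : (fun ij : Fin n × Fin n => (Matrix.of fun i j => x (i, j)) ij.1 ij.2) = x := by
    funext ij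
    cases ij
    rfl
  rw [evalMat, hx] at this
  simpa using this

theorem det_X_matrix_ne_zero {K : Type*} [Field K] {n : ℕ} :
    (Matrix.of fun i j : Fin n => (X (i, j) : MvPolynomial (Fin n × Fin n) K)).det ≠ 0 := by
  intro h0
  set ev := (eval fun ij : Fin n × Fin n => ((1 : Matrix (Fin n) (Fin n) K) ij.1 ij.2)) with hev
  have h1 := congrArg ev h0
  rw [map_zero, RingHom.map_det] at h1
  have h2 : ev.mapMatrix (Matrix.of fun i j : Fin n => (X (i, j) : MvPolynomial (Fin n × Fin n) K))
      = 1 := by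
    ext i j
    simp [hev, Matrix.one_apply]
  rw [h2, Matrix.det_one] at h1
  exact one_ne_zero h1


noncomputable def Phi (K : Type*) [Field K] (n : ℕ) :
    MvPolynomial (Fin n) K →+* MvPolynomial (Fin n) (MvPolynomial (Fin n × Fin n) K) :=
  eval₂Hom ((C : MvPolynomial (Fin n × Fin n) K →+*
      MvPolynomial (Fin n) (MvPolynomial (Fin n × Fin n) K)).comp
    (C : K →+* MvPolynomial (Fin n × Fin n) K))
    (fun i => ∑ j, C (X (i, j)) * X j)

theorem Phi_C {K : Type*} [Field K] {n : ℕ} (a : K) : Phi K n (C a) = C (C a) := by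
  simp [Phi]

theorem Phi_X {K : Type*} [Field K] {n : ℕ} (i : Fin n) :
    Phi K n (X i) = ∑ j, C (X (i, j)) * X j := by
  simp [Phi]

set_option synthInstance.maxHeartbeats 1000000 in
theorem genericMap_C {K : Type*} [Field K] {n : ℕ} (a : K) :
    genericMap K n (C a) =
      C (algebraMap (MvPolynomial (Fin n × Fin n) K) (GenField K n) (C a)) := by
  simp [genericMap]

set_option synthInstance.maxHeartbeats 1000000 in
theorem genericMap_X {K : Type*} [Field K] {n : ℕ} (i : Fin n) :
    genericMap K n (X i) = ∑ j, C (yCoord i j) * X j := by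
  simp [genericMap]

theorem cc_C {F : Type*} [Field F] {n : ℕ} (g : Matrix (Fin n) (Fin n) F) (a : F) :
    cc g (C a) = C a := by
  simp [cc, algebraMap_eq]

theorem cc_X {F : Type*} [Field F] {n : ℕ} (g : Matrix (Fin n) (Fin n) F) (i : Fin n) :
    cc g (X i) = ∑ j, C (g i j) * X j := by
  simp [cc]

set_option synthInstance.maxHeartbeats 1000000 in
theorem genericMap_eq_map_Phi (K : Type*) [Field K] (n : ℕ) :
    genericMap K n = (MvPolynomial.map
        (algebraMap (MvPolynomial (Fin n × Fin n) K) (GenField K n))).comp (Phi K n) := by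
  apply MvPolynomial.ringHom_ext
  · intro a
    rw [RingHom.comp_apply, genericMap_C, Phi_C, MvPolynomial.map_C]
  · intro i
    rw [RingHom.comp_apply, genericMap_X, Phi_X, map_sum]
    refine Finset.sum_congr rfl fun j _ => ?_
    rw [map_mul, MvPolynomial.map_C, MvPolynomial.map_X]
    rfl

set_option synthInstance.maxHeartbeats 1000000 in
theorem cc_eq_map_Phi {K : Type*} [Field K] {n : ℕ} (g : Matrix (Fin n) (Fin n) K) :
    (cc g).toRingHom = (MvPolynomial.map
        ((eval fun ij : Fin n × Fin n => g ij.1 ij.2) :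
          MvPolynomial (Fin n × Fin n) K →+* K)).comp (Phi K n) := by
  apply MvPolynomial.ringHom_ext
  · intro a
    rw [RingHom.comp_apply, AlgHom.toRingHom_eq_coe, RingHom.coe_coe, cc_C, Phi_C,
      MvPolynomial.map_C, eval_C]
  · intro i
    rw [RingHom.comp_apply, AlgHom.toRingHom_eq_coe, RingHom.coe_coe, cc_X, Phi_X, map_sum]
    refine Finset.sum_congr rfl fun j _ => ?_
    rw [map_mul, MvPolynomial.map_C, MvPolynomial.map_X, eval_X]

set_option synthInstance.maxHeartbeats 1000000 in
theorem genericMap_eq_cc_comp (K : Type*) [Field K] (n : ℕ) :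
    genericMap K n = ((cc (Matrix.of fun i j => yCoord (K := K) (n := n) i j)).toRingHom).comp
      (MvPolynomial.map ((algebraMap (MvPolynomial (Fin n × Fin n) K) (GenField K n)).comp
        (C : K →+* MvPolynomial (Fin n × Fin n) K))) := by
  apply MvPolynomial.ringHom_ext
  · intro a
    rw [RingHom.comp_apply, genericMap_C, MvPolynomial.map_C, AlgHom.toRingHom_eq_coe,
      RingHom.coe_coe, cc_C]
    rfl
  · intro i
    rw [RingHom.comp_apply, genericMap_X, MvPolynomial.map_X, AlgHom.toRingHom_eq_coe,
      RingHom.coe_coe, cc_X]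
    rfl

end Poly

end Aux

open Submodule Module in
/-- Over an infinite field, there is a nonempty Zariski open subset `U`
of `GL_n(K)` on which the circuits set of the truncated ideal `(gI)_{≤d}` is constant and
equal to the generic circuits set `gcs(I_{≤d}) = cs((γI)_{≤d})`. -/
theorem exists_open_cs_trunc_eq_gcs {K : Type*} [Field K] [Infinite K] {n : ℕ}
    (d : ℕ) (hd : 0 < d) (I : Ideal (MvPolynomial (Fin n) K)) (hI : IsHomogIdeal I) :
    ∃ p : MvPolynomial (Fin n × Fin n) K,
      (∃ g : Matrix (Fin n) (Fin n) K, g.det ≠ 0 ∧ evalMat p g ≠ 0) ∧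
      ∀ g : Matrix (Fin n) (Fin n) K, g.det ≠ 0 → evalMat p g ≠ 0 →
        cs (trunc (Ideal.map (genericMap K n) I) d) =
          cs (trunc (Ideal.map (cc g) I) d) := by
  classical
  have hι : Function.Injective (algebraMap (MvPolynomial (Fin n × Fin n) K) (GenField K n)) :=
    IsFractionRing.injective _ _
  -- the truncation as a finite-dimensional subspace
  let W : Submodule K (MvPolynomial (Fin n) K) :=
    { carrier := trunc I d
      add_mem' := fun {a b} ha hb =>
        ⟨I.add_mem ha.1 hb.1, (totalDegree_add a b).trans (max_le ha.2 hb.2)⟩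
      zero_mem' := ⟨I.zero_mem, by simp [totalDegree_zero]⟩
      smul_mem' := fun c {x} hx =>
        ⟨by rw [smul_eq_C_mul]; exact I.mul_mem_left _ hx.1,
          (totalDegree_smul_le c x).trans hx.2⟩ }
  haveI hWfd : FiniteDimensional K W := by
    apply Submodule.finiteDimensional_of_le (S₂ := restrictTotalDegree (Fin n) K d)
    intro x hx
    exact (mem_restrictTotalDegree (Fin n) d x).mpr hx.2
  obtain ⟨m, f, hf⟩ := Submodule.fg_iff_exists_fin_generating_family.mp
    ((Submodule.fg_iff_finiteDimensional W).mpr hWfd)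
  set Φf : Fin m → MvPolynomial (Fin n) (MvPolynomial (Fin n × Fin n) K) :=
    fun i => Phi K n (f i) with hΦf
  set Tf : Finset (Fin n →₀ ℕ) := Finset.univ.biUnion fun i => (Φf i).support with hTf
  have hT : ∀ i, (Φf i).support ⊆ Tf := by
    intro i
    intro x hx
    rw [hTf]
    exact Finset.mem_biUnion.mpr ⟨i, Finset.mem_univ i, hx⟩
  set B : Fin m → {x // x ∈ Tf} → MvPolynomial (Fin n × Fin n) K :=
    fun i j => coeff (j : Fin n →₀ ℕ) (Φf i) with hB
  -- specialization polynomials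
  have hspec := fun (T : Finset {x // x ∈ Tf}) =>
    exists_poly_rank_spec (K := K) (algebraMap _ (GenField K n)) hι
      (fun i (j : {x // x ∈ T}) => B i j.1)
  choose pT hpT0 hpT using hspec
  obtain ⟨p0, hp00, hp0⟩ := exists_poly_rank_spec (K := K) (algebraMap _ (GenField K n)) hι B
  refine ⟨p0 * ∏ T : Finset {x // x ∈ Tf}, pT T, ?_, ?_⟩
  · -- existence of a good point
    have hpne : p0 * ∏ T : Finset {x // x ∈ Tf}, pT T ≠ 0 :=
      mul_ne_zero hp00 (Finset.prod_ne_zero_iff.mpr fun T _ => hpT0 T)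
    set dX : MvPolynomial (Fin n × Fin n) K :=
      (Matrix.of fun i j : Fin n => (X (i, j) : MvPolynomial (Fin n × Fin n) K)).det with hdX
    obtain ⟨g, hg⟩ := exists_matrix_evalMat_ne_zero
      (p := (p0 * ∏ T : Finset {x // x ∈ Tf}, pT T) * dX)
      (mul_ne_zero hpne det_X_matrix_ne_zero)
    have hsplit : evalMat ((p0 * ∏ T : Finset {x // x ∈ Tf}, pT T) * dX) g =
        evalMat (p0 * ∏ T : Finset {x // x ∈ Tf}, pT T) g * evalMat dX g := by
      rw [evalMat, evalMat, evalMat, map_mul]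
    have hdetg : evalMat dX g = g.det := by
      rw [evalMat, hdX, RingHom.map_det]
      congr 1
      ext i j
      simp
    rw [hsplit, hdetg] at hg
    exact ⟨g, right_ne_zero_of_mul hg, left_ne_zero_of_mul hg⟩
  · intro g hdet hpg
    set ψ : MvPolynomial (Fin n × Fin n) K →+* K :=
      (eval fun ij : Fin n × Fin n => g ij.1 ij.2) with hψdef
    have hpg' : ψ (p0 * ∏ T : Finset {x // x ∈ Tf}, pT T) ≠ 0 := hpg
    have hψ0 : ψ p0 ≠ 0 :=
      ne_zero_of_dvd_ne_zero hpg' (map_dvd ψ (Dvd.intro _ rfl))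
    have hψT : ∀ T : Finset {x // x ∈ Tf}, ψ (pT T) ≠ 0 := fun T =>
      ne_zero_of_dvd_ne_zero hpg'
        (map_dvd ψ ((Finset.dvd_prod_of_mem pT (Finset.mem_univ T)).mul_left p0))
    -- matrix over the generic field
    set Yc : Matrix (Fin n) (Fin n) (GenField K n) :=
      Matrix.of fun i j => yCoord (K := K) (n := n) i j with hYc
    have hdetY : Yc.det ≠ 0 := by
      have h1 : Yc = (algebraMap (MvPolynomial (Fin n × Fin n) K)
          (GenField K n)).mapMatrix (Matrix.of fun i j : Fin n =>
            (X (i, j) : MvPolynomial (Fin n × Fin n) K)) := by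
        ext i j
        rfl
      rw [h1, ← RingHom.map_det]
      intro h
      exact det_X_matrix_ne_zero (hι (by rw [h, map_zero]))
    set φK : K →+* MvPolynomial (Fin n × Fin n) K :=
      (C : K →+* MvPolynomial (Fin n × Fin n) K) with hφK
    set ιR : MvPolynomial (Fin n × Fin n) K →+* GenField K n :=
      algebraMap (MvPolynomial (Fin n × Fin n) K) (GenField K n) with hιR
    -- generic side as a span
    have hvL : ∀ x, cc Yc (MvPolynomial.map (ιR.comp φK) x) =
        MvPolynomial.map ιR (Phi K n x) := by
      intro x
      have h1 := congrArg (fun h : MvPolynomial (Fin n) K →+* MvPolynomial (Fin n) (GenField K n)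
        => h x) (genericMap_eq_cc_comp K n)
      have h2 := congrArg (fun h : MvPolynomial (Fin n) K →+* MvPolynomial (Fin n) (GenField K n)
        => h x) (genericMap_eq_map_Phi K n)
      simp only [RingHom.comp_apply] at h1 h2
      rw [← h1.symm.trans h2]
      rfl
    have hideal : Ideal.map (genericMap K n) I =
        Ideal.map (cc Yc) (Ideal.map (MvPolynomial.map (ιR.comp φK)) I) := by
      rw [map_cc_eq_map_toRingHom, Ideal.map_map, ← genericMap_eq_cc_comp]
    have hSL : trunc (Ideal.map (genericMap K n) I) d =
        ↑(span (GenField K n) (Set.range fun i => MvPolynomial.map ιR (Φf i))) := by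
      rw [hideal, trunc_map_cc Yc hdetY _ d,
        trunc_map_basechange (ιR.comp φK) I hI d]
      have hspanW : span (GenField K n) (MvPolynomial.map (ιR.comp φK) '' (trunc I d)) =
          span (GenField K n) (Set.range fun i => MvPolynomial.map (ιR.comp φK) (f i)) := by
        apply le_antisymm
        · rw [Submodule.span_le]
          rintro _ ⟨x, hx, rfl⟩
          have hxW : x ∈ W := hx
          rw [← hf, mem_span_range_iff_exists_fun] at hxW
          obtain ⟨c, rfl⟩ := hxW
          rw [map_sum]
          apply Submodule.sum_mem
          intro i _
          rw [smul_eq_C_mul, map_mul, MvPolynomial.map_C, ← smul_eq_C_mul]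
          exact Submodule.smul_mem _ _ (Submodule.subset_span ⟨i, rfl⟩)
        · rw [Submodule.span_le]
          rintro _ ⟨i, rfl⟩
          apply Submodule.subset_span
          refine ⟨f i, ?_, rfl⟩
          show f i ∈ W
          rw [← hf]
          exact Submodule.subset_span ⟨i, rfl⟩
      rw [hspanW]
      have himg : (cc Yc) '' ↑(span (GenField K n)
          (Set.range fun i => MvPolynomial.map (ιR.comp φK) (f i))) =
          ↑(Submodule.map (cc Yc).toLinearMap (span (GenField K n)
            (Set.range fun i => MvPolynomial.map (ιR.comp φK) (f i)))) := rfl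
      rw [himg, Submodule.map_span]
      have hsets : ⇑(cc Yc).toLinearMap '' Set.range (fun i =>
          MvPolynomial.map (ιR.comp φK) (f i)) =
          Set.range (fun i => MvPolynomial.map ιR (Φf i)) := by
        ext q
        constructor
        · rintro ⟨y, ⟨i, rfl⟩, rfl⟩
          exact ⟨i, (hvL (f i)).symm⟩
        · rintro ⟨i, rfl⟩
          exact ⟨MvPolynomial.map (ιR.comp φK) (f i), ⟨i, rfl⟩, hvL (f i)⟩
      rw [hsets]
    -- special side as a span
    have hvK : ∀ x, cc g x = MvPolynomial.map ψ (Phi K n x) := by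
      intro x
      have h1 := congrArg (fun h : MvPolynomial (Fin n) K →+* MvPolynomial (Fin n) K
        => h x) (cc_eq_map_Phi g)
      simpa using h1
    have hSK : trunc (Ideal.map (cc g) I) d =
        ↑(span K (Set.range fun i => MvPolynomial.map ψ (Φf i))) := by
      rw [trunc_map_cc g hdet I d]
      have h1 : trunc I d = ↑W := rfl
      rw [h1, ← hf]
      have himg : (cc g) '' ↑(span K (Set.range f)) =
          ↑(Submodule.map (cc g).toLinearMap (span K (Set.range f))) := rfl
      rw [himg, Submodule.map_span]
      have hsets : ⇑(cc g).toLinearMap '' Set.range f =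
          Set.range (fun i => MvPolynomial.map ψ (Φf i)) := by
        ext q
        constructor
        · rintro ⟨y, ⟨i, rfl⟩, rfl⟩
          exact ⟨i, (hvK (f i)).symm⟩
        · rintro ⟨i, rfl⟩
          exact ⟨f i, ⟨i, rfl⟩, hvK (f i)⟩
      rw [hsets]
    -- compare circuit sets
    apply cs_congr
    intro s
    rw [hSL, hSK]
    rw [exists_mem_span_support_subset_iff ιR Φf Tf hT s,
      exists_mem_span_support_subset_iff ψ Φf Tf hT s]
    set Ts : Finset {x // x ∈ Tf} :=
      Finset.univ.filter (fun j : {x // x ∈ Tf} => (j : Fin n →₀ ℕ) ∉ s) with hTs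
    have he : ∀ j : {x // x ∈ Tf}, ((j : Fin n →₀ ℕ) ∉ s) ↔ j ∈ Ts := by
      intro j
      simp [hTs]
    let e : {j : {x // x ∈ Tf} // (j : Fin n →₀ ℕ) ∉ s} ≃ {x // x ∈ Ts} :=
      Equiv.subtypeEquivRight he
    have hKs : finrank K (span K (Set.range fun i =>
        fun j : {j : {x // x ∈ Tf} // (j : Fin n →₀ ℕ) ∉ s} => ψ (coeff (j : Fin n →₀ ℕ) (Φf i)))) =
        finrank K (span K (Set.range fun i => fun j : {x // x ∈ Ts} => ψ (B i j.1))) := by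
      rw [← finrank_span_range_comp_equiv e.symm
        (fun i => fun j : {j : {x // x ∈ Tf} // (j : Fin n →₀ ℕ) ∉ s} => ψ (B i j.1))]
      rfl
    have hLs : finrank (GenField K n) (span (GenField K n) (Set.range fun i =>
        fun j : {j : {x // x ∈ Tf} // (j : Fin n →₀ ℕ) ∉ s} => ιR (coeff (j : Fin n →₀ ℕ) (Φf i)))) =
        finrank (GenField K n) (span (GenField K n)
          (Set.range fun i => fun j : {x // x ∈ Ts} => ιR (B i j.1))) := by
      rw [← finrank_span_range_comp_equiv e.symm
        (fun i => fun j : {j : {x // x ∈ Tf} // (j : Fin n →₀ ℕ) ∉ s} => ιR (B i j.1))]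
      rfl
    rw [hKs, hLs, hpT Ts ψ (hψT Ts), hp0 ψ hψ0]
end

section
/- Let I be a homogeneous ideal of A and γ the generic change of coordinates over K(y). Then for every h ∈ GL_n(K), gcs(hI) = gcs(I); i.e., the generic circuits set is invariant under linear changes of coordinates. -/
open MvPolynomial

noncomputable def subF {K : Type*} [Field K] {n : ℕ} (g : Matrix (Fin n) (Fin n) K) :
    MvPolynomial (Fin n × Fin n) K →ₐ[K] MvPolynomial (Fin n × Fin n) K :=
  aeval (fun p => ∑ k, C (g p.1 k) * X (k, p.2))

lemma subF_comp {K : Type*} [Field K] {n : ℕ} (g₁ g₂ : Matrix (Fin n) (Fin n) K) :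
    (subF g₁).comp (subF g₂) = subF (g₂ * g₁) := by
  apply MvPolynomial.algHom_ext
  rintro ⟨i, j⟩
  simp only [AlgHom.comp_apply, subF, aeval_X, map_sum, map_mul, aeval_C,
    algebraMap_eq, Matrix.mul_apply]
  simp only [Finset.mul_sum, Finset.sum_mul, mul_assoc]
  rw [Finset.sum_comm]

lemma subF_one {K : Type*} [Field K] {n : ℕ} :
    subF (1 : Matrix (Fin n) (Fin n) K) = AlgHom.id K _ := by
  apply MvPolynomial.algHom_ext
  rintro ⟨i, j⟩
  simp [subF, Matrix.one_apply, apply_ite C]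

/-- The `GenField` copies of `MvPolynomial`-definitions from the problem file,
restated locally for experimentation. -/
noncomputable def subEquiv {K : Type*} [Field K] {n : ℕ} (g : Matrix (Fin n) (Fin n) K)
    (hg : IsUnit g.det) :
    MvPolynomial (Fin n × Fin n) K ≃+* MvPolynomial (Fin n × Fin n) K :=
  (AlgEquiv.ofAlgHom (subF g) (subF g⁻¹)
    (by rw [subF_comp, Matrix.nonsing_inv_mul g hg, subF_one])
    (by rw [subF_comp, Matrix.mul_nonsing_inv g hg, subF_one])).toRingEquiv

noncomputable def phiGen {K : Type*} [Field K] {n : ℕ} (g : Matrix (Fin n) (Fin n) K)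
    (hg : IsUnit g.det) : GenField K n ≃+* GenField K n :=
  IsFractionRing.ringEquivOfRingEquiv (subEquiv g hg)

lemma phiGen_algebraMap {K : Type*} [Field K] {n : ℕ} (g : Matrix (Fin n) (Fin n) K)
    (hg : IsUnit g.det) (p : MvPolynomial (Fin n × Fin n) K) :
    phiGen g hg (algebraMap _ (GenField K n) p) = algebraMap _ _ (subF g p) := by
  simp [phiGen, IsFractionRing.ringEquivOfRingEquiv_algebraMap, subEquiv]

noncomputable def PhiGen {K : Type*} [Field K] {n : ℕ} (g : Matrix (Fin n) (Fin n) K)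
    (hg : IsUnit g.det) :
    MvPolynomial (Fin n) (GenField K n) ≃+* MvPolynomial (Fin n) (GenField K n) :=
  MvPolynomial.mapEquiv _ (phiGen g hg)

set_option synthInstance.maxHeartbeats 400000 in
lemma key_comp {K : Type*} [Field K] {n : ℕ} (h : Matrix (Fin n) (Fin n) K)
    (hh : IsUnit h.det) :
    ((PhiGen h hh : MvPolynomial (Fin n) (GenField K n) →+* _).comp (genericMap K n)) =
      (genericMap K n).comp (cc h : MvPolynomial (Fin n) K →+* _) := by
  apply MvPolynomial.ringHom_ext
  · intro a
    simp only [RingHom.comp_apply, genericMap, cc, RingHom.coe_coe, eval₂Hom_C,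
      RingHom.coe_comp, Function.comp_apply, PhiGen, mapEquiv_apply, map_C,
      phiGen_algebraMap]
    simp only [subF, aeval_C, algebraMap_eq, eval₂Hom_C, RingHom.coe_comp,
      Function.comp_apply]
  · intro i
    simp only [RingHom.comp_apply, genericMap, RingHom.coe_coe, eval₂Hom_X',
      PhiGen, mapEquiv_apply, map_sum, map_mul, map_C, map_X, yCoord,
      phiGen_algebraMap, subF, aeval_X]
    simp only [cc, RingHom.coe_coe, aeval_X, map_sum, map_mul, eval₂Hom_C, eval₂Hom_X',
      RingHom.coe_comp, Function.comp_apply, yCoord, Finset.mul_sum, Finset.sum_mul,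
      mul_assoc]
    rw [Finset.sum_comm]

lemma cs_image {σ R S : Type*} [CommSemiring R] [CommSemiring S]
    (e : MvPolynomial σ R ≃+* MvPolynomial σ S)
    (hsupp : ∀ f, (e f).support = f.support) (T : Set (MvPolynomial σ R)) :
    cs (e '' T) = cs T := by
  ext s
  constructor
  · rintro ⟨⟨f, ⟨g, hgT, rfl⟩, hf0, hfs⟩, hmin⟩
    refine ⟨⟨g, hgT, fun hg => hf0 (by simp [hg]), by rw [← hsupp]; exact hfs⟩, ?_⟩
    intro g' hg' hg'0 hsub
    have := hmin (e g') ⟨g', hg', rfl⟩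
      (fun h0 => hg'0 (e.injective (by simp [h0]))) (by rw [hsupp]; exact hsub)
    rw [hsupp] at this; exact this
  · rintro ⟨⟨f, hfT, hf0, hfs⟩, hmin⟩
    refine ⟨⟨e f, ⟨f, hfT, rfl⟩, fun h0 => hf0 (e.injective (by simp [h0])),
      by rw [hsupp]; exact hfs⟩, ?_⟩
    rintro g ⟨g', hg', rfl⟩ hg0 hsub
    rw [hsupp] at hsub ⊢
    exact hmin g' hg' (fun h0 => hg0 (by simp [h0])) hsub

lemma cs_map_ideal {σ R : Type*} [CommRing R] (e : MvPolynomial σ R ≃+* MvPolynomial σ R)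
    (hsupp : ∀ f, (e f).support = f.support) (J : Ideal (MvPolynomial σ R)) :
    cs (((Ideal.map (e : MvPolynomial σ R →+* MvPolynomial σ R) J) :
        Ideal (MvPolynomial σ R)) : Set (MvPolynomial σ R)) =
      cs ((J : Ideal (MvPolynomial σ R)) : Set (MvPolynomial σ R)) := by
  have h2 : (((Ideal.map (e : MvPolynomial σ R →+* MvPolynomial σ R) J) :
        Ideal (MvPolynomial σ R)) : Set (MvPolynomial σ R)) = e '' (J : Set _) := by
    ext x
    rw [SetLike.mem_coe,
      Ideal.mem_map_iff_of_surjective (e : MvPolynomial σ R →+* MvPolynomial σ R) e.surjective]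
    simp only [Set.mem_image, SetLike.mem_coe]
    tauto
  rw [h2]
  exact cs_image e hsupp _

set_option maxHeartbeats 2000000 in
set_option synthInstance.maxHeartbeats 1000000 in
/-- The generic circuits set `gcs(I) = cs(γI)` of a homogeneous ideal is
invariant under linear changes of coordinates: `gcs(hI) = gcs(I)` for all `h ∈ GL_n(K)`. -/
theorem gcs_invariant {K : Type*} [Field K] {n : ℕ}
    (I : Ideal (MvPolynomial (Fin n) K)) (hI : IsHomogIdeal I)
    (h : Matrix (Fin n) (Fin n) K) (hh : IsUnit h.det) :
    cs ((Ideal.map (genericMap K n) (Ideal.map (cc h) I) :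
          Ideal (MvPolynomial (Fin n) (GenField K n))) :
        Set (MvPolynomial (Fin n) (GenField K n))) =
      cs ((Ideal.map (genericMap K n) I : Ideal (MvPolynomial (Fin n) (GenField K n))) :
        Set (MvPolynomial (Fin n) (GenField K n))) := by
  have hmap1 : Ideal.map (cc h) I
      = Ideal.map ((cc h : MvPolynomial (Fin n) K →+* MvPolynomial (Fin n) K)) I := rfl
  have h1 : Ideal.map (genericMap K n) (Ideal.map (cc h) I)
      = Ideal.map ((PhiGen h hh : MvPolynomial (Fin n) (GenField K n) →+* _))
          (Ideal.map (genericMap K n) I) := by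
    rw [hmap1, Ideal.map_map, Ideal.map_map, key_comp]
  rw [h1]
  exact cs_map_ideal (PhiGen h hh)
    (fun f => by
      have := MvPolynomial.support_map_of_injective f
        (f := (phiGen h hh : GenField K n →+* GenField K n)) (phiGen h hh).injective
      simpa [PhiGen, mapEquiv_apply] using this) _
end

section
/- Let ω = (ω_1,...,ω_n) with ω_1 ≥ ... ≥ ω_n ≥ 0 and let W ⊆ A_d be a K-vector subspace. For an integer 0 ≤ a ≤ ω_1 d, let S_a be the set of monomials of A_d of ω-weight strictly less than a. Then the dimension of the ω-weight-a homogeneous component of in_ω(W) equals rk^{S_a}(W) − rk^{S_{a+1}}(W), where rk^S(W) := dim_K((W + ⟨S⟩)/⟨S⟩). -/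
open MvPolynomial

/-- The weight of an exponent vector with respect to an integral weight vector `ω ∈ ℤⁿ`. -/
def wtZ {n : ℕ} (ω : Fin n → ℤ) (m : Fin n →₀ ℕ) : ℤ := ∑ i, ω i * (m i)

/-- The `K`-span of a set of monomials. -/
noncomputable def monSpanSet (K : Type*) [Field K] {n : ℕ} (S : Set (Fin n →₀ ℕ)) :
    Submodule K (MvPolynomial (Fin n) K) :=
  Submodule.span K ((fun m => (monomial m (1 : K) : MvPolynomial (Fin n) K)) '' S)

/-- `rk^S W := dim_K (W + ⟨S⟩)/⟨S⟩`, the dimension of the image of `W` in `A/⟨S⟩`. -/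
noncomputable def rkUp {K : Type*} [Field K] {n : ℕ}
    (W : Submodule K (MvPolynomial (Fin n) K)) (S : Set (Fin n →₀ ℕ)) : ℕ :=
  Module.finrank K ↥(Submodule.map (monSpanSet K S).mkQ W)

/-- `S_a`: the set of monomials of (standard) degree `d` of `ω`-weight strictly less
than `a`. -/
def Sa {n : ℕ} (ω : Fin n → ℤ) (d : ℕ) (a : ℤ) : Set (Fin n →₀ ℕ) :=
  {m | (m.sum fun _ e => e) = d ∧ wtZ ω m < a}

open Classical in
/-- The initial form of a polynomial with respect to an integral weight `ω`. -/
noncomputable def iniWZ {K : Type*} [Field K] {n : ℕ} (ω : Fin n → ℤ)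
    (f : MvPolynomial (Fin n) K) : MvPolynomial (Fin n) K :=
  ∑ m ∈ f.support.filter (fun m => ∀ m' ∈ f.support, wtZ ω m' ≤ wtZ ω m),
    monomial m (coeff m f)


section Aux

variable {K : Type*} [Field K] {n : ℕ}

lemma monSpanSet_eq (S : Set (Fin n →₀ ℕ)) :
    monSpanSet K S = MvPolynomial.restrictSupport K S := by
  rw [monSpanSet, MvPolynomial.restrictSupport, AddMonoidAlgebra.supported_eq_span_single]
  exact congrArg (Submodule.span K)
    (Set.image_congr' fun m => (single_eq_monomial m (1 : K)).symm)

lemma mem_monSpanSet {S : Set (Fin n →₀ ℕ)} {f : MvPolynomial (Fin n) K} :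
    f ∈ monSpanSet K S ↔ ↑f.support ⊆ S := by
  rw [monSpanSet_eq, MvPolynomial.restrictSupport]
  exact Iff.rfl

lemma monSpanSet_mono {S T : Set (Fin n →₀ ℕ)} (h : S ⊆ T) :
    monSpanSet K S ≤ monSpanSet K T := fun f hf =>
  mem_monSpanSet.mpr ((mem_monSpanSet.mp hf).trans h)

lemma coeff_sum_filter (f : MvPolynomial (Fin n) K) (p : (Fin n →₀ ℕ) → Prop)
    [DecidablePred p] (k : Fin n →₀ ℕ) :
    coeff k (∑ m ∈ f.support.filter p, monomial m (coeff m f)) =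
      if p k then coeff k f else 0 := by
  classical
  rw [MvPolynomial.coeff_sum]
  simp only [coeff_monomial]
  rw [Finset.sum_ite_eq' (f.support.filter p) k (fun m => coeff m f)]
  simp only [Finset.mem_filter, MvPolynomial.mem_support_iff]
  by_cases h1 : p k <;> by_cases h2 : coeff k f = 0 <;> simp [h1, h2]

open Classical in
/-- Projection to the `ω`-weight-`a` component, as a linear map. -/
noncomputable def projW (ω : Fin n → ℤ) (a : ℤ) :
    MvPolynomial (Fin n) K →ₗ[K] MvPolynomial (Fin n) K where
  toFun f := ∑ m ∈ f.support.filter (fun m => wtZ ω m = a), monomial m (coeff m f)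
  map_add' f g := by
    apply MvPolynomial.ext
    intro k
    rw [MvPolynomial.coeff_add, coeff_sum_filter, coeff_sum_filter, coeff_sum_filter,
      MvPolynomial.coeff_add]
    split_ifs <;> simp
  map_smul' c f := by
    apply MvPolynomial.ext
    intro k
    rw [RingHom.id_apply, MvPolynomial.coeff_smul, coeff_sum_filter, coeff_sum_filter,
      MvPolynomial.coeff_smul]
    split_ifs <;> simp

lemma coeff_projW (ω : Fin n → ℤ) (a : ℤ) (f : MvPolynomial (Fin n) K) (k : Fin n →₀ ℕ) :
    coeff k (projW ω a f) = if wtZ ω k = a then coeff k f else 0 := by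
  classical
  rw [projW]
  simp only [LinearMap.coe_mk, AddHom.coe_mk]
  rw [coeff_sum_filter]

lemma coeff_iniWZ (ω : Fin n → ℤ) (f : MvPolynomial (Fin n) K) (k : Fin n →₀ ℕ) :
    coeff k (iniWZ ω f) =
      if ∀ m' ∈ f.support, wtZ ω m' ≤ wtZ ω k then coeff k f else 0 := by
  classical
  rw [iniWZ, coeff_sum_filter]

/-- If the maximal weight of `f` is `a`, the initial form is the weight-`a` projection. -/
lemma iniWZ_eq_projW (ω : Fin n → ℤ) (a : ℤ) (f : MvPolynomial (Fin n) K)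
    (hle : ∀ m ∈ f.support, wtZ ω m ≤ a) (hmem : ∃ m ∈ f.support, wtZ ω m = a) :
    iniWZ ω f = projW ω a f := by
  apply MvPolynomial.ext
  intro k
  rw [coeff_iniWZ, coeff_projW]
  obtain ⟨m0, hm0, hm0a⟩ := hmem
  split_ifs with h1 h2 h2
  · rfl
  · by_contra hc
    have hk : k ∈ f.support := MvPolynomial.mem_support_iff.mpr hc
    exact h2 (le_antisymm (hle k hk) (hm0a ▸ h1 m0 hm0))
  · by_contra hc
    have hk : k ∈ f.support := MvPolynomial.mem_support_iff.mpr fun h0 => hc h0.symm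
    exact h1 fun m' hm' => h2 ▸ hle m' hm'
  · rfl

lemma projW_projW (ω : Fin n → ℤ) (a b : ℤ) (f : MvPolynomial (Fin n) K) :
    projW ω a (projW ω b f) = if a = b then projW ω b f else 0 := by
  apply MvPolynomial.ext
  intro k
  rw [coeff_projW, coeff_projW]
  split_ifs with h1 h2 h2 <;> simp_all [coeff_projW]

lemma support_projW_subset (ω : Fin n → ℤ) (a : ℤ) (f : MvPolynomial (Fin n) K) :
    ↑(projW ω a f).support ⊆ {m | wtZ ω m = a} := by
  intro k hk
  have := MvPolynomial.mem_support_iff.mp hk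
  rw [coeff_projW] at this
  by_contra hc
  exact this (if_neg hc)

lemma degree_eq_of_mem {d : ℕ} {f : MvPolynomial (Fin n) K}
    (hf : f ∈ homogeneousSubmodule (Fin n) K d) {m : Fin n →₀ ℕ} (hm : m ∈ f.support) :
    (m.sum fun _ e => e) = d := by
  rw [mem_homogeneousSubmodule] at hf
  have := hf (MvPolynomial.mem_support_iff.mp hm)
  simpa [Finsupp.weight_apply, Finsupp.sum] using this

set_option maxHeartbeats 1000000 in
set_option synthInstance.maxHeartbeats 1000000 in
lemma rank_nullity_sub {Q : Type*} [AddCommGroup Q] [Module K Q]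
    (V : Submodule K (MvPolynomial (Fin n) K)) [FiniteDimensional K ↥V]
    (g : MvPolynomial (Fin n) K →ₗ[K] Q) :
    Module.finrank K ↥(Submodule.map g V) + Module.finrank K ↥(V ⊓ LinearMap.ker g) =
      Module.finrank K ↥V := by
  have h1 := LinearMap.finrank_range_add_finrank_ker (g.comp V.subtype)
  rw [LinearMap.range_comp, Submodule.range_subtype, LinearMap.ker_comp] at h1
  have h2 : Submodule.comap V.subtype (LinearMap.ker g) =
      Submodule.comap V.subtype (V ⊓ LinearMap.ker g) := by
    rw [Submodule.comap_inf, Submodule.comap_subtype_self, top_inf_eq]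
  rw [h2] at h1
  rw [← h1]
  congr 1
  exact (Submodule.comapSubtypeEquivOfLe (inf_le_left : V ⊓ LinearMap.ker g ≤ V)).finrank_eq.symm

end Aux

/-- Let `ω₁ ≥ … ≥ ω_n ≥ 0` and `W ⊆ A_d` a subspace.  For `0 ≤ a ≤ ω₁d`,
the dimension of the `ω`-weight-`a` homogeneous component of `in_ω(W)` equals
`rk^{S_a}(W) − rk^{S_{a+1}}(W)`. -/
theorem finrank_weight_component_iniW {K : Type*} [Field K] {n : ℕ} (hn : 0 < n)
    (ω : Fin n → ℤ) (hω : ∀ i j : Fin n, i ≤ j → ω j ≤ ω i) (hω0 : ∀ i, 0 ≤ ω i)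
    (d : ℕ) (W : Submodule K (MvPolynomial (Fin n) K))
    (hW : W ≤ homogeneousSubmodule (Fin n) K d)
    (a : ℤ) (ha : 0 ≤ a) (ha' : a ≤ ω ⟨0, hn⟩ * d) :
    Module.finrank K
        ↥(Submodule.span K (iniWZ ω '' (W : Set (MvPolynomial (Fin n) K))) ⊓
          monSpanSet K {m : Fin n →₀ ℕ | wtZ ω m = a}) =
      rkUp W (Sa ω d a) - rkUp W (Sa ω d (a + 1)) := by
  classical
  -- Finite dimensionality
  have hWfd : FiniteDimensional K ↥W := by
    have hle : W ≤ restrictTotalDegree (Fin n) K d := fun f hf => by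
      rw [mem_restrictTotalDegree]
      exact ((mem_homogeneousSubmodule _ _).mp (hW hf)).totalDegree_le
    exact Submodule.finiteDimensional_of_le hle
  have hW'fd : FiniteDimensional K ↥(W ⊓ monSpanSet K (Sa ω d (a + 1))) :=
    Submodule.finiteDimensional_of_le inf_le_left
  have hW''fd : FiniteDimensional K ↥(W ⊓ monSpanSet K (Sa ω d a)) :=
    Submodule.finiteDimensional_of_le inf_le_left
  -- The main structural equality.
  have hmain : Submodule.span K (iniWZ ω '' (W : Set (MvPolynomial (Fin n) K))) ⊓
      monSpanSet K {m : Fin n →₀ ℕ | wtZ ω m = a} =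
      Submodule.map (projW ω a) (W ⊓ monSpanSet K (Sa ω d (a + 1))) := by
    apply le_antisymm
    · intro x hx
      obtain ⟨hx1, hx2⟩ := Submodule.mem_inf.mp hx
      have hxproj : projW ω a x = x := by
        apply MvPolynomial.ext
        intro k
        rw [coeff_projW]
        split_ifs with h
        · rfl
        · symm
          by_contra hc
          exact h (mem_monSpanSet.mp hx2 (MvPolynomial.mem_support_iff.mpr hc))
      have hmap : Submodule.map (projW ω a)
          (Submodule.span K (iniWZ ω '' (W : Set (MvPolynomial (Fin n) K)))) ≤
          Submodule.map (projW ω a) (W ⊓ monSpanSet K (Sa ω d (a + 1))) := by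
        rw [Submodule.map_span, Submodule.span_le]
        rintro y ⟨z, ⟨f, hfW, rfl⟩, rfl⟩
        rw [SetLike.mem_coe]
        by_cases hf0 : f = 0
        · subst hf0
          have h00 : iniWZ ω (0 : MvPolynomial (Fin n) K) = 0 := by simp [iniWZ]
          rw [h00, map_zero]
          exact Submodule.zero_mem _
        · have hsupp : f.support.Nonempty := MvPolynomial.support_nonempty.mpr hf0
          obtain ⟨m0, hm0, hmax⟩ := f.support.exists_max_image (wtZ ω) hsupp
          have hini : iniWZ ω f = projW ω (wtZ ω m0) f :=
            iniWZ_eq_projW ω (wtZ ω m0) f (fun m hm => hmax m hm) ⟨m0, hm0, rfl⟩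
          rw [hini, projW_projW]
          split_ifs with hab
          · refine ⟨f, Submodule.mem_inf.mpr ⟨hfW, mem_monSpanSet.mpr fun m hm => ?_⟩,
              by rw [hab]⟩
            refine ⟨degree_eq_of_mem (hW hfW) hm, ?_⟩
            have h3 : wtZ ω m ≤ wtZ ω m0 := hmax m hm
            omega
          · exact Submodule.zero_mem _
      exact hmap ⟨x, hx1, hxproj⟩
    · intro y hy
      obtain ⟨f, hf, rfl⟩ := Submodule.mem_map.mp hy
      obtain ⟨hfW, hfS⟩ := Submodule.mem_inf.mp hf
      apply Submodule.mem_inf.mpr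
      constructor
      · by_cases h0 : projW ω a f = 0
        · rw [h0]; exact Submodule.zero_mem _
        · have hex : ∃ m ∈ f.support, wtZ ω m = a := by
            by_contra hc
            push_neg at hc
            apply h0
            apply MvPolynomial.ext
            intro k
            rw [coeff_projW]
            split_ifs with h
            · by_contra hck
              exact hc k (MvPolynomial.mem_support_iff.mpr fun h0' => hck (by simp [h0'])) h
            · simp
          have hle : ∀ m ∈ f.support, wtZ ω m ≤ a := by
            intro m hm
            have := (mem_monSpanSet.mp hfS hm).2
            omega
          rw [← iniWZ_eq_projW ω a f hle hex]
          exact Submodule.subset_span ⟨f, hfW, rfl⟩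
      · exact mem_monSpanSet.mpr (support_projW_subset ω a f)
  rw [hmain]
  -- kernel identification
  have hker : (W ⊓ monSpanSet K (Sa ω d (a + 1))) ⊓ LinearMap.ker (projW ω a) =
      W ⊓ monSpanSet K (Sa ω d a) := by
    apply le_antisymm
    · intro f hf
      obtain ⟨hf1, hfk⟩ := Submodule.mem_inf.mp hf
      obtain ⟨hfW, hfS⟩ := Submodule.mem_inf.mp hf1
      refine Submodule.mem_inf.mpr ⟨hfW, mem_monSpanSet.mpr fun m hm => ?_⟩
      have h1 := mem_monSpanSet.mp hfS hm
      refine ⟨h1.1, ?_⟩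
      have h2 : wtZ ω m < a + 1 := h1.2
      rcases lt_or_eq_of_le (Int.lt_add_one_iff.mp h2) with h | h
      · exact h
      · exfalso
        have hce : coeff m ((projW ω a) f) = coeff m f := by rw [coeff_projW, if_pos h]
        rw [LinearMap.mem_ker.mp hfk] at hce
        exact MvPolynomial.mem_support_iff.mp hm hce.symm
    · intro f hf
      obtain ⟨hfW, hfS⟩ := Submodule.mem_inf.mp hf
      have hsub : ∀ m ∈ f.support, wtZ ω m < a := fun m hm => (mem_monSpanSet.mp hfS hm).2
      refine Submodule.mem_inf.mpr ⟨Submodule.mem_inf.mpr ⟨hfW,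
        mem_monSpanSet.mpr fun m hm => ⟨(mem_monSpanSet.mp hfS hm).1, by
          have := hsub m hm; omega⟩⟩, LinearMap.mem_ker.mpr ?_⟩
      apply MvPolynomial.ext
      intro k
      rw [coeff_projW]
      split_ifs with h
      · by_contra hc
        have hk : k ∈ f.support := MvPolynomial.mem_support_iff.mpr fun h0' => hc (by simp [h0'])
        have := hsub k hk
        omega
      · simp
  have hLHS := rank_nullity_sub (W ⊓ monSpanSet K (Sa ω d (a + 1))) (projW ω a)
  rw [hker] at hLHS
  have hA := rank_nullity_sub W (monSpanSet K (Sa ω d a)).mkQ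
  rw [Submodule.ker_mkQ] at hA
  have hB := rank_nullity_sub W (monSpanSet K (Sa ω d (a + 1))).mkQ
  rw [Submodule.ker_mkQ] at hB
  have hmono : (W ⊓ monSpanSet K (Sa ω d a)) ≤ (W ⊓ monSpanSet K (Sa ω d (a + 1))) := by
    apply inf_le_inf_left
    apply monSpanSet_mono
    intro m hm
    exact ⟨hm.1, by have := hm.2; omega⟩
  have hfr1 : Module.finrank K ↥(W ⊓ monSpanSet K (Sa ω d a)) ≤
      Module.finrank K ↥(W ⊓ monSpanSet K (Sa ω d (a + 1))) := Submodule.finrank_mono hmono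
  rw [rkUp, rkUp]
  omega
end

section
/- Let I be a homogeneous ideal of A, ω ∈ ℤ^n a weight, and Ĩ ⊆ A[t] the homogenization of I with respect to ω (generated by t^{max_i(ω·a_i)} f(t^{-ω_1}X_1,...,t^{-ω_n}X_n) for f = Σ α_i X^{a_i} ∈ I). Then for the family I_a := Ĩ|_{t=a}: I_1 = I, I_0 = in_ω(I), and for every a ≠ 0, I_a = D_a(I), where D_a is the diagonal change of coordinates X_i ↦ a^{-ω_i} X_i. In particular, for a ≠ 0 the ideals I_a all have the same Hilbert function as I. -/
open MvPolynomial

/-- The initial ideal of `I` with respect to an integral weight `ω`. -/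
noncomputable def iniIdealWZ {K : Type*} [Field K] {n : ℕ} (ω : Fin n → ℤ)
    (I : Ideal (MvPolynomial (Fin n) K)) : Ideal (MvPolynomial (Fin n) K) :=
  Ideal.span {p | ∃ f ∈ I, p = iniWZ ω f}

/-- The maximal `ω`-weight of a monomial of `f` (and `0` for `f = 0`). -/
noncomputable def maxWt {K : Type*} [Field K] {n : ℕ} (ω : Fin n → ℤ)
    (f : MvPolynomial (Fin n) K) : ℤ :=
  WithBot.unbotD 0 ((f.support.image (wtZ ω)).max)

/-- The homogenization `f̃ = t^{max_i ω·a_i} f(t^{-ω₁}X₁, …, t^{-ω_n}X_n) ∈ A[t]` of `f`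
with respect to `ω`. -/
noncomputable def homogW {K : Type*} [Field K] {n : ℕ} (ω : Fin n → ℤ)
    (f : MvPolynomial (Fin n) K) : Polynomial (MvPolynomial (Fin n) K) :=
  ∑ m ∈ f.support,
    Polynomial.monomial (maxWt ω f - wtZ ω m).toNat (monomial m (coeff m f))

/-- The homogenization `Ĩ ⊆ A[t]` of the ideal `I` with respect to `ω`. -/
noncomputable def homogIdealW {K : Type*} [Field K] {n : ℕ} (ω : Fin n → ℤ)
    (I : Ideal (MvPolynomial (Fin n) K)) : Ideal (Polynomial (MvPolynomial (Fin n) K)) :=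
  Ideal.span (homogW ω '' (I : Set (MvPolynomial (Fin n) K)))

/-- The member `I_a = Ĩ|_{t=a}` of the flat family associated to `I` and `ω`. -/
noncomputable def fiberW {K : Type*} [Field K] {n : ℕ} (ω : Fin n → ℤ)
    (I : Ideal (MvPolynomial (Fin n) K)) (a : K) : Ideal (MvPolynomial (Fin n) K) :=
  Ideal.map (Polynomial.evalRingHom (MvPolynomial.C a)) (homogIdealW ω I)

section Aux

variable {K : Type*} [Field K] {n : ℕ}

lemma cc_diag_X (c : Fin n → K) (i : Fin n) :
    cc (Matrix.diagonal c) (X i) = C (c i) * X i := by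
  rw [cc, aeval_X]
  rw [Finset.sum_eq_single i]
  · simp [Matrix.diagonal]
  · intro j _ hj
    simp [Matrix.diagonal_apply_ne' _ hj]
  · simp

lemma cc_diag_monomial (c : Fin n → K) (m : Fin n →₀ ℕ) (b : K) :
    cc (Matrix.diagonal c) (monomial m b) = monomial m (b * ∏ i, c i ^ m i) := by
  rw [monomial_eq, map_mul, map_finsuppProd]
  simp only [map_pow, cc_diag_X, mul_pow, algHom_C]
  rw [monomial_eq, map_mul]
  have h1 : (m.prod fun i e => (C (c i)) ^ e * X i ^ e : MvPolynomial (Fin n) K)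
      = (m.prod fun i e => (C (c i)) ^ e) * m.prod fun i e => X i ^ e := by
    rw [Finsupp.prod, Finsupp.prod, Finsupp.prod, Finset.prod_mul_distrib]
  rw [h1]
  have h2 : (m.prod fun i e => (C (c i)) ^ e : MvPolynomial (Fin n) K)
      = C (∏ i, c i ^ m i) := by
    rw [Finsupp.prod]
    have h3 : (C (∏ i, c i ^ m i) : MvPolynomial (Fin n) K) = ∏ i, C (c i) ^ m i := by
      rw [map_prod]; simp [map_pow]
    rw [h3]
    refine Finset.prod_subset (Finset.subset_univ _) ?_
    intro i _ hi
    simp [Finsupp.notMem_support_iff.mp hi]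
  rw [h2, algebraMap_eq]
  ring

lemma wt_le_maxWt (ω : Fin n → ℤ) {f : MvPolynomial (Fin n) K} {m : Fin n →₀ ℕ}
    (hm : m ∈ f.support) : wtZ ω m ≤ maxWt ω f := by
  have h := Finset.le_max (Finset.mem_image_of_mem (wtZ ω) hm)
  obtain ⟨M, hM⟩ := Finset.max_of_mem (Finset.mem_image_of_mem (wtZ ω) hm)
  rw [hM] at h
  rw [maxWt, hM]
  exact_mod_cast h

lemma maxWt_attained (ω : Fin n → ℤ) {f : MvPolynomial (Fin n) K} {m : Fin n →₀ ℕ}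
    (hm : m ∈ f.support) : ∃ m0 ∈ f.support, wtZ ω m0 = maxWt ω f := by
  obtain ⟨M, hM⟩ := Finset.max_of_mem (Finset.mem_image_of_mem (wtZ ω) hm)
  have hMmem : M ∈ f.support.image (wtZ ω) := Finset.mem_of_max hM
  obtain ⟨m0, hm0, hw⟩ := Finset.mem_image.mp hMmem
  exact ⟨m0, hm0, by rw [hw, maxWt, hM]; rfl⟩

lemma eval_homogW (ω : Fin n → ℤ) (a : K) (f : MvPolynomial (Fin n) K) :
    Polynomial.eval (C a) (homogW ω f) =
      ∑ m ∈ f.support,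
        monomial m (coeff m f) * (C a) ^ (maxWt ω f - wtZ ω m).toNat := by
  simp [homogW, Polynomial.eval_finset_sum, Polynomial.eval_monomial]

lemma eval_one_homogW (ω : Fin n → ℤ) (f : MvPolynomial (Fin n) K) :
    Polynomial.eval (C 1) (homogW ω f) = f := by
  rw [eval_homogW]
  simp only [map_one, one_pow, mul_one]
  exact f.support_sum_monomial_coeff

lemma eval_zero_homogW (ω : Fin n → ℤ) (f : MvPolynomial (Fin n) K) :
    Polynomial.eval (C 0) (homogW ω f) = iniWZ ω f := by
  classical
  rw [eval_homogW, iniWZ]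
  rw [Finset.sum_filter]
  apply Finset.sum_congr rfl
  intro m hm
  by_cases h : maxWt ω f ≤ wtZ ω m
  · have h0 : (maxWt ω f - wtZ ω m).toNat = 0 := by omega
    rw [h0, pow_zero, mul_one, if_pos]
    intro m' hm'
    exact le_trans (wt_le_maxWt ω hm') h
  · have h0 : (maxWt ω f - wtZ ω m).toNat ≠ 0 := by
      have := wt_le_maxWt ω hm
      omega
    rw [if_neg, map_zero, zero_pow h0, mul_zero]
    intro hP
    obtain ⟨m0, hm0, hw⟩ := maxWt_attained ω hm
    exact h (hw ▸ hP m0 hm0)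

lemma eval_ne_zero_homogW (ω : Fin n → ℤ) {a : K} (ha : a ≠ 0) (f : MvPolynomial (Fin n) K) :
    Polynomial.eval (C a) (homogW ω f) =
      C (a ^ maxWt ω f) * cc (Matrix.diagonal fun i => a ^ (-(ω i))) f := by
  rw [eval_homogW]
  set M := maxWt ω f with hM
  conv_rhs => rw [f.as_sum, map_sum, Finset.mul_sum]
  apply Finset.sum_congr rfl
  intro m hm
  rw [cc_diag_monomial, C_mul_monomial, ← map_pow, mul_comm, C_mul_monomial]
  congr 1
  have hw := wt_le_maxWt ω hm
  have hexp : (a : K) ^ (M - wtZ ω m).toNat = a ^ M * a ^ (-(wtZ ω m)) := by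
    rw [← zpow_natCast, Int.toNat_of_nonneg (by omega), zpow_sub₀ ha, zpow_neg,
      div_eq_mul_inv]
  have hprod : (∏ i, (a ^ (-(ω i))) ^ (m i : ℕ)) = a ^ (-(wtZ ω m)) := by
    have : ∀ i : Fin n, (a ^ (-(ω i))) ^ (m i : ℕ) = a ^ (-(ω i * (m i : ℤ))) := by
      intro i
      rw [← zpow_natCast (a ^ (-(ω i))), ← zpow_mul]
      congr 1
      ring
    rw [Finset.prod_congr rfl fun i _ => this i]
    rw [show (-(wtZ ω m)) = ∑ i, -(ω i * (m i : ℤ)) by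
      rw [wtZ, ← Finset.sum_neg_distrib]]
    induction (Finset.univ : Finset (Fin n)) using Finset.induction with
    | empty => simp
    | insert _ _ h ih => rw [Finset.sum_insert h, Finset.prod_insert h, zpow_add₀ ha, ih]
  rw [hexp, hprod]
  ring

lemma eval_homogW_mem_fiberW (ω : Fin n → ℤ) (I : Ideal (MvPolynomial (Fin n) K)) (a : K)
    {f : MvPolynomial (Fin n) K} (hf : f ∈ I) :
    Polynomial.eval (C a) (homogW ω f) ∈ fiberW ω I a := by
  have : homogW ω f ∈ homogIdealW ω I :=
    Ideal.subset_span ⟨f, hf, rfl⟩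
  simpa [fiberW] using Ideal.mem_map_of_mem (Polynomial.evalRingHom (C a)) this

end Aux
section Aux2

variable {K : Type*} [Field K] {n : ℕ}

lemma cc_diag_isHomogeneous (c : Fin n → K) {p : MvPolynomial (Fin n) K} {d : ℕ}
    (hp : p.IsHomogeneous d) : (cc (Matrix.diagonal c) p).IsHomogeneous d := by
  have hps : cc (Matrix.diagonal c) p =
      ∑ m ∈ p.support, monomial m (coeff m p * ∏ i, c i ^ m i) := by
    conv_lhs => rw [p.as_sum, map_sum]
    exact Finset.sum_congr rfl fun m _ => cc_diag_monomial c m _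
  rw [hps]
  apply MvPolynomial.IsHomogeneous.sum
  intro m hm
  apply isHomogeneous_monomial
  rw [Finsupp.degree_eq_weight_one]
  exact hp (MvPolynomial.mem_support_iff.mp hm)

lemma cc_diag_comp (c c' : Fin n → K) (h : ∀ i, c i * c' i = 1) :
    (cc (Matrix.diagonal c)).comp (cc (Matrix.diagonal c')) =
      AlgHom.id K (MvPolynomial (Fin n) K) := by
  apply MvPolynomial.algHom_ext
  intro i
  rw [AlgHom.comp_apply, cc_diag_X, map_mul, cc_diag_X, AlgHom.id_apply, algHom_C, algebraMap_eq,
    ← mul_assoc, ← map_mul, mul_comm (c' i), h, map_one, one_mul]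

/-- The algebra automorphism given by an invertible diagonal change of coordinates. -/
noncomputable def ccDiagEquiv (c c' : Fin n → K) (h : ∀ i, c i * c' i = 1)
    (h' : ∀ i, c' i * c i = 1) :
    MvPolynomial (Fin n) K ≃ₐ[K] MvPolynomial (Fin n) K :=
  AlgEquiv.ofAlgHom (cc (Matrix.diagonal c)) (cc (Matrix.diagonal c'))
    (cc_diag_comp c c' h) (cc_diag_comp c' c h')

lemma degComp_map (c c' : Fin n → K) (h : ∀ i, c i * c' i = 1)
    (h' : ∀ i, c' i * c i = 1) (I : Ideal (MvPolynomial (Fin n) K)) (d : ℕ) :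
    degComp (Ideal.map (cc (Matrix.diagonal c)) I) d =
      Submodule.map ((ccDiagEquiv c c' h h').toLinearEquiv :
        MvPolynomial (Fin n) K →ₗ[K] MvPolynomial (Fin n) K) (degComp I d) := by
  set e := ccDiagEquiv c c' h h' with he
  have hsurj : Function.Surjective (cc (Matrix.diagonal c)) := e.surjective
  have h1 : Submodule.restrictScalars K (Ideal.map (cc (Matrix.diagonal c)) I) =
      Submodule.map (e.toLinearEquiv : MvPolynomial (Fin n) K →ₗ[K] MvPolynomial (Fin n) K)
        (Submodule.restrictScalars K I) := by
    ext x
    rw [Submodule.restrictScalars_mem, Ideal.mem_map_iff_of_surjective _ hsurj]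
    simp only [Submodule.mem_map, Submodule.restrictScalars_mem]
    constructor
    · rintro ⟨y, hy, rfl⟩; exact ⟨y, hy, rfl⟩
    · rintro ⟨y, hy, rfl⟩; exact ⟨y, hy, rfl⟩
  have h2 : Submodule.map
      (e.toLinearEquiv : MvPolynomial (Fin n) K →ₗ[K] MvPolynomial (Fin n) K)
      (homogeneousSubmodule (Fin n) K d) = homogeneousSubmodule (Fin n) K d := by
    apply le_antisymm
    · rintro x ⟨y, hy, rfl⟩
      exact cc_diag_isHomogeneous c hy
    · intro x hx
      refine ⟨cc (Matrix.diagonal c') x, ?_, ?_⟩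
      · exact cc_diag_isHomogeneous c' hx
      · exact DFunLike.congr_fun (cc_diag_comp c c' h) x
  have h3 : ∀ P Q : Submodule K (MvPolynomial (Fin n) K),
      Submodule.map (e.toLinearEquiv : MvPolynomial (Fin n) K →ₗ[K] MvPolynomial (Fin n) K)
        (P ⊓ Q) =
      Submodule.map (e.toLinearEquiv : MvPolynomial (Fin n) K →ₗ[K] MvPolynomial (Fin n) K) P ⊓
      Submodule.map (e.toLinearEquiv : MvPolynomial (Fin n) K →ₗ[K] MvPolynomial (Fin n) K) Q := by
    intro P Q
    rw [Submodule.map_equiv_eq_comap_symm, Submodule.map_equiv_eq_comap_symm,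
      Submodule.map_equiv_eq_comap_symm, Submodule.comap_inf]
  rw [degComp, degComp, h3, h1, h2]

end Aux2
/-- For the flat family `I_a = Ĩ|_{t=a}` given by the homogenization of
`I` with respect to `ω ∈ ℤⁿ`: `I₁ = I`, `I₀ = in_ω(I)`, and for `a ≠ 0`,
`I_a = D_a(I)` where `D_a : X_i ↦ a^{-ω_i}X_i`; in particular for `a ≠ 0` the ideals `I_a`
have the same Hilbert function as `I`. -/
theorem fiberW_family {K : Type*} [Field K] {n : ℕ} (ω : Fin n → ℤ)
    (I : Ideal (MvPolynomial (Fin n) K)) (hI : IsHomogIdeal I) :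
    fiberW ω I 1 = I ∧
    fiberW ω I 0 = iniIdealWZ ω I ∧
    (∀ a : K, a ≠ 0 →
      fiberW ω I a = Ideal.map (cc (Matrix.diagonal fun i => a ^ (-(ω i)))) I) ∧
    (∀ a : K, a ≠ 0 → ∀ d : ℕ,
      Module.finrank K (degComp (fiberW ω I a) d) = Module.finrank K (degComp I d)) := by
  have part3 : ∀ a : K, a ≠ 0 →
      fiberW ω I a = Ideal.map (cc (Matrix.diagonal fun i => a ^ (-(ω i)))) I := by
    intro a ha
    apply le_antisymm
    · rw [fiberW, homogIdealW, Ideal.map_span, Ideal.span_le]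
      rintro p ⟨q, ⟨f, hf, rfl⟩, rfl⟩
      show (Polynomial.evalRingHom (C a)) (homogW ω f) ∈ _
      rw [Polynomial.coe_evalRingHom, eval_ne_zero_homogW ω ha]
      exact Ideal.mul_mem_left _ _ (Ideal.mem_map_of_mem _ hf)
    · rw [Ideal.map_le_iff_le_comap]
      intro f hf
      rw [Ideal.mem_comap]
      have h1 : Polynomial.eval (C a) (homogW ω f) ∈ fiberW ω I a :=
        eval_homogW_mem_fiberW ω I a hf
      have h2 : cc (Matrix.diagonal fun i => a ^ (-(ω i))) f =
          C (a ^ (-(maxWt ω f))) * Polynomial.eval (C a) (homogW ω f) := by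
        rw [eval_ne_zero_homogW ω ha, ← mul_assoc, ← map_mul, ← zpow_add₀ ha,
          neg_add_cancel, zpow_zero, map_one, one_mul]
      rw [h2]
      exact Ideal.mul_mem_left _ _ h1
  refine ⟨?_, ?_, part3, ?_⟩
  · rw [fiberW, homogIdealW, Ideal.map_span]
    have himg : (Polynomial.evalRingHom (C (1 : K))) '' (homogW ω '' ↑I) = ↑I := by
      rw [Set.image_image]
      have h1 : ∀ f : MvPolynomial (Fin n) K,
          (Polynomial.evalRingHom (C (1 : K))) (homogW ω f) = f := by
        intro f
        rw [Polynomial.coe_evalRingHom, eval_one_homogW]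
      simp only [h1]
      exact Set.image_id _
    rw [himg, Ideal.span_eq]
  · rw [fiberW, homogIdealW, Ideal.map_span, iniIdealWZ]
    congr 1
    rw [Set.image_image]
    ext p
    simp only [Set.mem_image, SetLike.mem_coe, Set.mem_setOf_eq]
    constructor
    · rintro ⟨f, hf, rfl⟩
      exact ⟨f, hf, by rw [Polynomial.coe_evalRingHom, eval_zero_homogW]⟩
    · rintro ⟨f, hf, rfl⟩
      exact ⟨f, hf, by rw [Polynomial.coe_evalRingHom, eval_zero_homogW]⟩
  · intro a ha d
    rw [part3 a ha]
    have h : ∀ i, (a ^ (-(ω i))) * (a ^ (ω i)) = 1 := by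
      intro i
      rw [← zpow_add₀ ha, neg_add_cancel, zpow_zero]
    have h' : ∀ i, (a ^ (ω i)) * (a ^ (-(ω i))) = 1 := by
      intro i
      rw [← zpow_add₀ ha, add_neg_cancel, zpow_zero]
    rw [degComp_map _ _ h h' I d]
    exact LinearEquiv.finrank_map_eq _ _
end
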